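/- arXiv:2501.00319 — 5 statements merged into one kernel-verified Lean document; each statement's English description precedes it below -/
import Mathlib

section
/- The set of minimal primes over the ideal I = (g, x^d+y^d+z^d+w^d) in R = ℂ[x,y,z,w] is finite, and its cardinality divides d. -/
noncomputable section FermatAux
section
open Polynomial
variable {S : Type*} [CommRing S]

private lemma scaleX_aux (u v : Sˣ) (h : (v : S) * u = 1) :
    (aeval (C (u : S) * X : S[X])).comp (aeval (C (v : S) * X)) = AlgHom.id S S[X] := by
  ext : 1
  simp only [AlgHom.coe_comp, Function.comp_apply, aeval_X, map_mul, aeval_C,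
    Polynomial.algebraMap_eq, AlgHom.coe_id, id_eq]
  rw [← mul_assoc, ← C_mul, h, map_one, one_mul]

/-- The algebra automorphism of `S[X]` scaling `X` by a unit `u`. -/
def scaleX (u : Sˣ) : S[X] ≃ₐ[S] S[X] :=
  AlgEquiv.ofAlgHom (aeval (C (u : S) * X)) (aeval (C ((u⁻¹ : Sˣ) : S) * X))
    (scaleX_aux _ _ u.inv_mul)
    (scaleX_aux _ _ u.mul_inv)

lemma scaleX_apply (u : Sˣ) (p : S[X]) : scaleX u p = aeval (C (u : S) * X) p := rfl

@[simp] lemma scaleX_C (u : Sˣ) (s : S) : scaleX u (C s) = C s := by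
  rw [scaleX_apply, aeval_C, Polynomial.algebraMap_eq]

@[simp] lemma scaleX_X (u : Sˣ) : scaleX u X = C (u : S) * X := by
  rw [scaleX_apply, aeval_X]

lemma scaleX_monomial (u : Sˣ) (m : ℕ) (a : S) :
    scaleX u (monomial m a) = monomial m ((u : S) ^ m * a) := by
  rw [← C_mul_X_pow_eq_monomial, map_mul, map_pow, scaleX_C, scaleX_X, mul_pow, ← C_pow,
    ← mul_assoc, mul_comm (C a), ← C_mul, C_mul_X_pow_eq_monomial]

lemma scaleX_one : scaleX (1 : Sˣ) = 1 := by
  apply AlgEquiv.ext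
  intro p
  induction p using Polynomial.induction_on' with
  | add p q hp hq => simp_all [map_add]
  | monomial n a => simp [scaleX_monomial]

lemma scaleX_mul (u v : Sˣ) : scaleX (u * v) = scaleX u * scaleX v := by
  apply AlgEquiv.ext
  intro p
  induction p using Polynomial.induction_on' with
  | add p q hp hq => simp_all [map_add, AlgEquiv.mul_apply]
  | monomial n a =>
      simp only [AlgEquiv.mul_apply, scaleX_monomial, Units.val_mul, mul_pow]
      ring_nf

lemma scaleX_pow (u : Sˣ) (k : ℕ) : (scaleX u) ^ k = scaleX (u ^ k) := by
  induction k with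
  | zero => simp [scaleX_one]
  | succ k ih => rw [pow_succ, pow_succ, ih, ← scaleX_mul]

lemma coeff_scaleX (u : Sˣ) (p : S[X]) (n : ℕ) :
    (scaleX u p).coeff n = (u : S) ^ n * p.coeff n := by
  induction p using Polynomial.induction_on' with
  | add p q hp hq => simp [hp, hq, mul_add]
  | monomial m a =>
      rw [scaleX_monomial, coeff_monomial, coeff_monomial]
      split <;> simp_all

/-- If all coefficients of `M` in degrees not divisible by `d` vanish, then modulo
`X^d + C c` the polynomial `M` is congruent to a constant. -/
lemma exists_C_sub_mem_span (d : ℕ) (c : S) (M : S[X])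
    (hM : ∀ n, ¬ d ∣ n → M.coeff n = 0) :
    ∃ h : S, M - C h ∈ Ideal.span {(X : S[X]) ^ d + C c} := by
  set J : Ideal S[X] := Ideal.span {(X : S[X]) ^ d + C c} with hJ
  set Q := Ideal.Quotient.mk J with hQ
  have hXd : Q (X ^ d) = Q (C (-c)) := by
    rw [Ideal.Quotient.eq]
    rw [map_neg, sub_neg_eq_add]
    exact Ideal.subset_span rfl
  refine ⟨∑ n ∈ M.support, M.coeff n * (-c) ^ (n / d), ?_⟩
  rw [← Ideal.Quotient.eq_zero_iff_mem, map_sub, sub_eq_zero]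
  conv_lhs => rw [M.as_sum_support]
  rw [map_sum, map_sum, map_sum]
  apply Finset.sum_congr rfl
  intro n hn
  have hdvd : d ∣ n := by
    by_contra hnd
    exact (Polynomial.mem_support_iff.mp hn) (hM n hnd)
  have hn' : n = d * (n / d) := (Nat.mul_div_cancel' hdvd).symm
  rw [← C_mul_X_pow_eq_monomial, map_mul, map_mul, map_pow]
  have hX : Q (X ^ n) = Q (C ((-c) ^ (n / d))) := by
    conv_lhs => rw [hn', pow_mul]
    rw [map_pow, hXd, ← map_pow, ← map_pow]
  rw [← map_pow, hX, ← map_mul]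

/-- The kernel of `S[X] → (S/(g₁))[X] → AdjoinRoot (X^d + C c̄)` is `(C g₁, X^d + C c)`. -/
lemma ker_pi (g1 : S) (d : ℕ) (c : S) :
    RingHom.ker ((AdjoinRoot.mk ((X : Polynomial (S ⧸ Ideal.span {g1})) ^ d +
        C (Ideal.Quotient.mk (Ideal.span {g1}) c))).comp
      (Polynomial.mapRingHom (Ideal.Quotient.mk (Ideal.span {g1})))) =
    Ideal.span {C g1, (X : S[X]) ^ d + C c} := by
  set mkA := Ideal.Quotient.mk (Ideal.span {g1}) with hmkA
  set Fb : Polynomial (S ⧸ Ideal.span {g1}) := X ^ d + C (mkA c) with hFb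
  apply le_antisymm
  · intro x hx
    rw [RingHom.mem_ker, RingHom.comp_apply, AdjoinRoot.mk_eq_zero] at hx
    obtain ⟨y, hy⟩ := hx
    obtain ⟨z, hz⟩ := Polynomial.map_surjective mkA Ideal.Quotient.mk_surjective y
    have hy' : Polynomial.map mkA x = Fb * y := hy
    have hmem : Polynomial.map mkA (x - (X ^ d + C c) * z) = 0 := by
      rw [Polynomial.map_sub, hy', Polynomial.map_mul, hz, Polynomial.map_add,
        Polynomial.map_pow, Polynomial.map_X, Polynomial.map_C, ← hFb, sub_self]
    have : x - (X ^ d + C c) * z ∈ RingHom.ker (Polynomial.mapRingHom mkA) := hmem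
    rw [Polynomial.ker_mapRingHom, Ideal.mk_ker] at this
    have h1 : x - (X ^ d + C c) * z ∈ Ideal.span {C g1, (X : S[X]) ^ d + C c} := by
      refine Ideal.map_le_iff_le_comap.mpr ?_ this
      rw [Ideal.span_le]
      rintro t rfl
      exact Ideal.mem_comap.mpr (Ideal.subset_span (by simp))
    have h2 : (X ^ d + C c) * z ∈ Ideal.span {C g1, (X : S[X]) ^ d + C c} :=
      Ideal.mul_mem_right _ _ (Ideal.subset_span (by simp))
    simpa using add_mem h1 h2
  · rw [Ideal.span_le]
    rintro t ht
    rcases ht with rfl | rfl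
    · have h0 : mkA g1 = 0 := Ideal.Quotient.eq_zero_iff_mem.mpr (Ideal.subset_span rfl)
      simp [RingHom.mem_ker, Polynomial.map_C, h0]
    · have : Polynomial.map mkA ((X : S[X]) ^ d + C c) = Fb := by
        simp [hFb]
      simp only [SetLike.mem_coe, RingHom.mem_ker, RingHom.comp_apply, coe_mapRingHom, this]
      exact AdjoinRoot.mk_self

/-- Contraction lemma: a constant in a minimal prime over `(C g₁, X^d + C c)`
is divisible by `g₁`. -/
lemma dvd_of_C_mem_minimalPrime {S : Type*} [CommRing S] {g1 : S} (hg1 : Prime g1)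
    {d : ℕ} (hd : 1 ≤ d) (c : S) {P : Ideal S[X]}
    (hP : P ∈ (Ideal.span {C g1, (X : S[X]) ^ d + C c}).minimalPrimes)
    {h : S} (hh : C h ∈ P) : g1 ∣ h := by
  by_contra hndvd
  set A := S ⧸ Ideal.span {g1} with hA
  haveI hsp : (Ideal.span {g1}).IsPrime := (Ideal.span_singleton_prime hg1.ne_zero).mpr hg1
  set mkA : S →+* A := Ideal.Quotient.mk (Ideal.span {g1}) with hmkA
  set Fb : Polynomial A := X ^ d + C (mkA c) with hFb
  have hFb_monic : Fb.Monic := by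
    apply Polynomial.monic_X_pow_add
    calc degree (C (mkA c)) ≤ 0 := degree_C_le
    _ < (d : WithBot ℕ) := by exact_mod_cast hd
  set B := AdjoinRoot Fb with hB
  set π : S[X] →+* B := (AdjoinRoot.mk Fb).comp (Polynomial.mapRingHom mkA) with hπ
  have hπ_surj : Function.Surjective π :=
    (AdjoinRoot.mk_surjective).comp (Polynomial.map_surjective mkA Ideal.Quotient.mk_surjective)
  have hker : RingHom.ker π = Ideal.span {C g1, (X : S[X]) ^ d + C c} := ker_pi g1 d c
  -- express P as the contraction of a minimal prime of B
  have hcor := Ideal.comap_minimalPrimes_eq_of_surjective hπ_surj (⊥ : Ideal B)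
  rw [← RingHom.ker_eq_comap_bot, hker] at hcor
  rw [hcor] at hP
  obtain ⟨q, hq, rfl⟩ := hP
  haveI hqprime : q.IsPrime := hq.1.1
  -- the image of h in B
  have hπCh : π (C h) = algebraMap A B (mkA h) := by
    simp only [hπ, RingHom.comp_apply, coe_mapRingHom, Polynomial.map_C]
    rw [AdjoinRoot.mk_C, ← AdjoinRoot.algebraMap_eq]
  have hmem_q : algebraMap A B (mkA h) ∈ q := by
    rw [← hπCh]; exact hh
  -- nilpotency in the localization
  set L := Localization q.primeCompl with hL
  have hmax : algebraMap B L (algebraMap A B (mkA h)) ∈ IsLocalRing.maximalIdeal L := by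
    rw [← Localization.AtPrime.comap_maximalIdeal (I := q)] at hmem_q
    exact hmem_q
  have hnil : IsNilpotent (algebraMap B L (algebraMap A B (mkA h))) :=
    by
      haveI := Ring.KrullDimLE.of_isLocalization q hq L
      exact Ring.KrullDimLE.isNilpotent_iff_mem_maximalIdeal.mpr hmax
  obtain ⟨n, hn⟩ := hnil
  rw [← map_pow, ← map_pow] at hn
  have h0 : algebraMap B L (algebraMap A B (mkA h ^ n)) = 0 := hn
  rw [IsLocalization.map_eq_zero_iff q.primeCompl] at h0
  obtain ⟨s, hs⟩ := h0
  -- torsion-freeness of B over A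
  haveI : IsDomain A := Ideal.Quotient.isDomain _
  haveI : Module.Free A B := Module.Free.of_basis (AdjoinRoot.powerBasis' hFb_monic).basis
  have hsmul : (mkA h ^ n) • (s : B) = 0 := by
    rw [Algebra.smul_def, mul_comm]; exact hs
  have hhne : mkA h ≠ 0 := by
    rw [hmkA, Ne, Ideal.Quotient.eq_zero_iff_mem, Ideal.mem_span_singleton]
    exact hndvd
  have := smul_eq_zero.mp hsmul
  rcases this with h1 | h2
  · exact pow_ne_zero n hhne h1
  · exact s.2 (h2 ▸ q.zero_mem)

section Main
set_option linter.unusedSectionVars false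
open Pointwise

variable [IsDomain S] {g1 : S} (hg1 : Prime g1) {d : ℕ} (hd : 1 ≤ d) (c : S)
  (u : Sˣ) (hu : ∀ n : ℕ, (u : S) ^ n = 1 ↔ d ∣ n)

lemma scaleX_F (v : Sˣ) (hv : (v : S) ^ d = 1) :
    scaleX v ((X : S[X]) ^ d + C c) = X ^ d + C c := by
  rw [map_add, map_pow, scaleX_X, scaleX_C, mul_pow, ← C_pow, hv, map_one, one_mul]

-- `σ^k` fixes the generators
include hu in
lemma scaleX_pow_fix (k : ℕ) :
    ((scaleX u) ^ k) (C g1) = C g1 ∧ ((scaleX u) ^ k) ((X : S[X]) ^ d + C c) = X ^ d + C c := by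
  rw [scaleX_pow]
  refine ⟨scaleX_C _ _, scaleX_F c _ ?_⟩
  rw [Units.val_pow_eq_pow_val, ← pow_mul, mul_comm, pow_mul, (hu d).mpr dvd_rfl, one_pow]

include hu in
lemma scaleX_order : (scaleX u) ^ d = 1 := by
  rw [scaleX_pow, show u ^ d = 1 from Units.ext (by
    rw [Units.val_pow_eq_pow_val, (hu d).mpr dvd_rfl, Units.val_one]), scaleX_one]

-- the ideal is invariant
lemma map_I_eq (e : S[X] ≃ₐ[S] S[X]) (h1 : e (C g1) = C g1)
    (h2 : e ((X : S[X]) ^ d + C c) = X ^ d + C c) :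
    Ideal.map (e : S[X] →+* S[X]) (Ideal.span {C g1, (X : S[X]) ^ d + C c}) =
      Ideal.span {C g1, (X : S[X]) ^ d + C c} := by
  rw [Ideal.map_span, Set.image_pair]
  simp only [RingHom.coe_coe, h1, h2]

lemma comap_I_eq (e : S[X] ≃ₐ[S] S[X]) (h1 : e (C g1) = C g1)
    (h2 : e ((X : S[X]) ^ d + C c) = X ^ d + C c) :
    Ideal.comap (e : S[X] →+* S[X]) (Ideal.span {C g1, (X : S[X]) ^ d + C c}) =
      Ideal.span {C g1, (X : S[X]) ^ d + C c} := by
  conv_lhs => rw [← map_I_eq c e h1 h2]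
  exact Ideal.comap_map_of_bijective _ e.bijective

lemma comap_minimal (e : S[X] ≃ₐ[S] S[X]) (h1 : e (C g1) = C g1)
    (h2 : e ((X : S[X]) ^ d + C c) = X ^ d + C c) {P : Ideal S[X]}
    (hP : P ∈ (Ideal.span {C g1, (X : S[X]) ^ d + C c}).minimalPrimes) :
    Ideal.comap (e : S[X] →+* S[X]) P ∈
      (Ideal.span {C g1, (X : S[X]) ^ d + C c}).minimalPrimes := by
  have hcor := Ideal.comap_minimalPrimes_eq_of_surjective
    (f := (e : S[X] →+* S[X])) e.surjective (Ideal.span {C g1, (X : S[X]) ^ d + C c})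
  rw [comap_I_eq c e h1 h2] at hcor
  rw [hcor]
  exact ⟨P, hP, rfl⟩


include hg1 hd hu in
/-- The "norm" of an element of a minimal prime lies in the ideal. -/
lemma norm_mem {P : Ideal S[X]}
    (hP : P ∈ (Ideal.span {C g1, (X : S[X]) ^ d + C c}).minimalPrimes)
    {r : S[X]} (hr : r ∈ P) :
    ∏ k ∈ Finset.range d, ((scaleX u) ^ k) r ∈ Ideal.span {C g1, (X : S[X]) ^ d + C c} := by
  set I' := Ideal.span {C g1, (X : S[X]) ^ d + C c} with hI'
  set σ := scaleX u with hσ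
  rcases eq_or_ne r 0 with rfl | hr0
  · rw [Finset.prod_eq_zero (Finset.mem_range.mpr hd) (by rw [map_zero])]
    exact I'.zero_mem
  set M := ∏ k ∈ Finset.range d, (σ ^ k) r with hM
  have hd0 : 0 ∈ Finset.range d := Finset.mem_range.mpr hd
  have hMP : M ∈ P := by
    rw [hM, ← Finset.mul_prod_erase _ _ hd0]
    exact Ideal.mul_mem_right _ _ (by simpa using hr)
  -- invariance of M under σ
  have hσM : σ M = M := by
    have h1 : σ M = ∏ k ∈ Finset.range d, (σ ^ (k + 1)) r := by
      rw [hM, map_prod]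
      exact Finset.prod_congr rfl fun k _ => by rw [pow_succ', AlgEquiv.mul_apply]
    have e1 := Finset.prod_range_succ' (fun k => (σ ^ k) r) d
    have e2 := Finset.prod_range_succ (fun k => (σ ^ k) r) d
    have h2 : (∏ k ∈ Finset.range d, (σ ^ (k + 1)) r) * ((σ ^ 0) r)
        = M * ((σ ^ d) r) := by rw [← e1, e2]
    rw [scaleX_order u hu] at h2
    simp only [pow_zero, AlgEquiv.one_apply] at h2
    have := mul_right_cancel₀ hr0 h2
    rw [h1, this]
  -- coefficients in degrees not divisible by d vanish
  have hcoeff : ∀ n, ¬ d ∣ n → M.coeff n = 0 := by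
    intro n hn
    have : (u : S) ^ n * M.coeff n = M.coeff n := by
      conv_rhs => rw [← hσM]
      rw [hσ, coeff_scaleX]
    have h2 : ((u : S) ^ n - 1) * M.coeff n = 0 := by
      rw [sub_mul, one_mul, this, sub_self]
    rcases mul_eq_zero.mp h2 with h | h
    · exact absurd ((hu n).mp (by rwa [sub_eq_zero] at h)) hn
    · exact h
  obtain ⟨h, hmem⟩ := exists_C_sub_mem_span d c M hcoeff
  have hspan_le : Ideal.span {(X : S[X]) ^ d + C c} ≤ I' :=
    Ideal.span_mono (by simp)
  have hChP : C h ∈ P := by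
    have : M - (M - C h) = C h := by ring
    rw [← this]
    exact Ideal.sub_mem _ hMP (hP.1.2 (hspan_le hmem))
  have hdvd : g1 ∣ h := dvd_of_C_mem_minimalPrime hg1 hd c hP hChP
  have hCh_mem : C h ∈ I' := by
    obtain ⟨t, rfl⟩ := hdvd
    rw [map_mul]
    exact Ideal.mul_mem_right _ _ (Ideal.subset_span (by simp))
  have hfin : (M - C h) + C h ∈ I' := Ideal.add_mem _ (hspan_le hmem) hCh_mem
  simpa using hfin

include hg1 hd hu in
/-- Transitivity: any minimal prime is a twist of any other. -/
lemma transitive_minimal {P Q : Ideal S[X]}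
    (hP : P ∈ (Ideal.span {C g1, (X : S[X]) ^ d + C c}).minimalPrimes)
    (hQ : Q ∈ (Ideal.span {C g1, (X : S[X]) ^ d + C c}).minimalPrimes) :
    ∃ k < d, Q = Ideal.comap (((scaleX u) ^ k : S[X] ≃ₐ[S] S[X]) : S[X] →+* S[X]) P := by
  set I' := Ideal.span {C g1, (X : S[X]) ^ d + C c} with hI'
  set σ := scaleX u with hσ
  haveI hPp : P.IsPrime := hP.1.1
  haveI hQp : Q.IsPrime := hQ.1.1
  have hsub : (Q : Set S[X]) ⊆ ⋃ k ∈ (↑(Finset.range d) : Set ℕ),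
      (Ideal.comap ((σ ^ k : S[X] ≃ₐ[S] S[X]) : S[X] →+* S[X]) P : Set S[X]) := by
    intro r hr
    have hnorm := norm_mem hg1 hd c u hu hQ hr
    have hprod : ∏ k ∈ Finset.range d, ((σ ^ k) : S[X] ≃ₐ[S] S[X]) r ∈ P :=
      hP.1.2 hnorm
    obtain ⟨k, hk, hmem⟩ := (Ideal.IsPrime.prod_mem_iff).mp hprod
    refine Set.mem_iUnion₂.mpr ⟨k, hk, ?_⟩
    exact hmem
  have havoid := (Ideal.subset_union_prime (R := S[X])
    (s := Finset.range d)
    (f := fun k => Ideal.comap ((σ ^ k : S[X] ≃ₐ[S] S[X]) : S[X] →+* S[X]) P) 0 0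
    (fun i _ _ _ => Ideal.IsPrime.comap _)).mp hsub
  obtain ⟨k, hk, hQle⟩ := havoid
  have hfix := scaleX_pow_fix (g1 := g1) c u hu k
  have hcm := comap_minimal c (σ ^ k) hfix.1 hfix.2 hP
  refine ⟨k, Finset.mem_range.mp hk, le_antisymm hQle (hcm.2 hQ.1 hQle)⟩


lemma comap_minimal' (e : S[X] ≃ₐ[S] S[X])
    (hmap : Ideal.map (e : S[X] →+* S[X]) (Ideal.span {C g1, (X : S[X]) ^ d + C c}) =
      Ideal.span {C g1, (X : S[X]) ^ d + C c}) {P : Ideal S[X]}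
    (hP : P ∈ (Ideal.span {C g1, (X : S[X]) ^ d + C c}).minimalPrimes) :
    Ideal.comap (e : S[X] →+* S[X]) P ∈
      (Ideal.span {C g1, (X : S[X]) ^ d + C c}).minimalPrimes := by
  have hcomap : Ideal.comap (e : S[X] →+* S[X]) (Ideal.span {C g1, (X : S[X]) ^ d + C c}) =
      Ideal.span {C g1, (X : S[X]) ^ d + C c} := by
    conv_lhs => rw [← hmap]
    exact Ideal.comap_map_of_bijective _ e.bijective
  have hcor := Ideal.comap_minimalPrimes_eq_of_surjective
    (f := (e : S[X] →+* S[X])) e.surjective (Ideal.span {C g1, (X : S[X]) ^ d + C c})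
  rw [hcomap] at hcor
  rw [hcor]
  exact ⟨P, hP, rfl⟩

include hg1 hd hu in
lemma main_abstract (hI : Ideal.span {C g1, (X : S[X]) ^ d + C c} ≠ ⊤) :
    (Ideal.span {C g1, (X : S[X]) ^ d + C c}).minimalPrimes.Finite ∧
    (Ideal.span {C g1, (X : S[X]) ^ d + C c}).minimalPrimes.ncard ∣ d := by
  classical
  set I' := Ideal.span {C g1, (X : S[X]) ^ d + C c} with hI'
  set σ := scaleX u with hσ
  obtain ⟨m, hm, hIm⟩ := Ideal.exists_le_maximal I' hI
  haveI := hm.isPrime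
  obtain ⟨P0, hP0, -⟩ := Ideal.exists_minimalPrimes_le hIm
  have hsurj : I'.minimalPrimes ⊆
      (fun k : ℕ => Ideal.comap ((σ ^ k : S[X] ≃ₐ[S] S[X]) : S[X] →+* S[X]) P0) ''
        (Set.Iio d) := by
    intro Q hQ
    obtain ⟨k, hk, hQeq⟩ := transitive_minimal hg1 hd c u hu hP0 hQ
    exact ⟨k, hk, hQeq.symm⟩
  have hfin : I'.minimalPrimes.Finite := Set.Finite.subset ((Set.finite_Iio d).image _) hsurj
  refine ⟨hfin, ?_⟩
  -- set up the action of powers of σ on ideals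
  set G := Subgroup.zpowers σ with hG
  have htoRingHom : ∀ e : S[X] ≃ₐ[S] S[X],
      (MulSemiringAction.toRingHom (S[X] ≃ₐ[S] S[X]) S[X] e) = (e : S[X] →+* S[X]) :=
    fun e => RingHom.ext fun x => rfl
  have hzp : G ≤ MulAction.stabilizer (S[X] ≃ₐ[S] S[X]) I' := by
    rw [hG, Subgroup.zpowers_le]
    rw [MulAction.mem_stabilizer_iff, Ideal.pointwise_smul_def, htoRingHom]
    exact map_I_eq c σ (scaleX_C _ _) (scaleX_F c u ((hu d).mpr dvd_rfl))
  have hmapall : ∀ e : S[X] ≃ₐ[S] S[X], e ∈ G →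
      Ideal.map (e : S[X] →+* S[X]) I' = I' := by
    intro e he
    have := hzp he
    rw [MulAction.mem_stabilizer_iff, Ideal.pointwise_smul_def, htoRingHom] at this
    exact this
  have horb : MulAction.orbit G P0 = I'.minimalPrimes := by
    apply subset_antisymm
    · rintro Q ⟨g, rfl⟩
      have h1 : (g : S[X] ≃ₐ[S] S[X]) • P0 =
          Ideal.comap (((g : S[X] ≃ₐ[S] S[X])⁻¹ : S[X] ≃ₐ[S] S[X]) : S[X] →+* S[X]) P0 := by
        rw [Ideal.pointwise_smul_eq_comap]
        exact Ideal.ext fun x => Iff.rfl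
      show (g : S[X] ≃ₐ[S] S[X]) • P0 ∈ I'.minimalPrimes
      rw [h1]
      exact comap_minimal' c _ (hmapall _ (inv_mem g.2)) hP0
    · intro Q hQ
      obtain ⟨k, hk, hQeq⟩ := transitive_minimal hg1 hd c u hu hP0 hQ
      refine ⟨⟨(σ ^ k)⁻¹, inv_mem (Subgroup.pow_mem _ (Subgroup.mem_zpowers σ) k)⟩, ?_⟩
      show ((σ ^ k)⁻¹ : S[X] ≃ₐ[S] S[X]) • P0 = Q
      rw [hQeq, Ideal.pointwise_smul_eq_comap]
      exact Ideal.ext fun x => Iff.rfl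
  have hcard1 : I'.minimalPrimes.ncard = Nat.card (MulAction.orbit G P0) := by
    rw [← horb, Nat.card_coe_set_eq]
  have hcard2 : Nat.card (MulAction.orbit G P0) = Nat.card (G ⧸ MulAction.stabilizer G P0) :=
    Nat.card_congr (MulAction.orbitEquivQuotientStabilizer G P0)
  have hcard3 : Nat.card (G ⧸ MulAction.stabilizer G P0) ∣ Nat.card G :=
    Subgroup.card_quotient_dvd_card _
  have hcard4 : Nat.card G = orderOf σ := Nat.card_zpowers σ
  have hord : orderOf σ ∣ d := orderOf_dvd_of_pow_eq_one (scaleX_order u hu)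
  rw [hcard1, hcard2]
  exact hcard3.trans (hcard4 ▸ hord)

end Main
end
end FermatAux

open MvPolynomial

/-- The affine cone over the Fermat surface: `x^d + y^d + z^d + w^d`. -/
noncomputable def fermat (d : ℕ) : MvPolynomial (Fin 4) ℂ :=
  X 0 ^ d + X 1 ^ d + X 2 ^ d + X 3 ^ d

lemma finSuccEquiv_rename_succ {R : Type*} [CommSemiring R] {n : ℕ}
    (q : MvPolynomial (Fin n) R) :
    finSuccEquiv R n (rename Fin.succ q) = Polynomial.C q := by
  induction q using MvPolynomial.induction_on with
  | C a => rw [rename_C, finSuccEquiv_apply, eval₂Hom_C]; rfl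
  | add p q hp hq => rw [map_add, map_add, hp, hq, map_add]
  | mul_X p i hp => rw [map_mul, map_mul, hp, rename_X, finSuccEquiv_X_succ, map_mul]

theorem stmt1 (d e : ℕ) (hd : 1 ≤ d) (g : MvPolynomial (Fin 4) ℂ)
    (hg_irr : Irreducible g) (hg_hom : g.IsHomogeneous e) (he : 1 ≤ e)
    (hg_w : (3 : Fin 4) ∉ g.vars) :
    (Ideal.span {g, fermat d}).minimalPrimes.Finite ∧
    (Ideal.span {g, fermat d}).minimalPrimes.ncard ∣ d := by
  classical
  set S3 := MvPolynomial (Fin 3) ℂ with hS3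
  set ψ : MvPolynomial (Fin 4) ℂ ≃ₐ[ℂ] Polynomial S3 :=
    (renameEquiv ℂ (Equiv.swap 3 0)).trans (MvPolynomial.finSuccEquiv ℂ 3) with hψ
  -- ψ g is a constant polynomial
  have hg'vars : (0 : Fin 4) ∉ (rename (Equiv.swap (3 : Fin 4) 0) g).vars := by
    intro h0
    have := vars_rename (Equiv.swap (3 : Fin 4) 0) g h0
    simp only [Finset.mem_image] at this
    obtain ⟨j, hj, hj0⟩ := this
    have : j = 3 := by
      have := (Equiv.swap (3 : Fin 4) 0).injective (a₁ := j) (a₂ := 3)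
      apply this
      rw [hj0, Equiv.swap_apply_left]
    exact hg_w (this ▸ hj)
  obtain ⟨g₂, hg₂⟩ := exists_rename_eq_of_vars_subset_range
    (rename (Equiv.swap (3 : Fin 4) 0) g) Fin.succ (Fin.succ_injective 3)
    (fun i hi => Fin.exists_succ_eq_of_ne_zero (fun h => hg'vars (h ▸ hi)))
  have hψg : ψ g = Polynomial.C g₂ := by
    rw [hψ]
    simp only [AlgEquiv.trans_apply, renameEquiv_apply]
    rw [← hg₂, finSuccEquiv_rename_succ]
  -- ψ (fermat d) = X^d + C c
  set c : S3 := X 2 ^ d + X 0 ^ d + X 1 ^ d with hc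
  have hren : ∀ (i : Fin 4), ψ (X i) = MvPolynomial.finSuccEquiv ℂ 3 (X ((Equiv.swap (3 : Fin 4) 0) i)) := by
    intro i
    simp only [hψ, AlgEquiv.trans_apply, renameEquiv_apply, rename_X]
  have e0 : ψ (X 0) = Polynomial.C (X 2) := by
    rw [hren, show ((Equiv.swap (3 : Fin 4) 0) 0) = Fin.succ 2 from by decide]
    exact finSuccEquiv_X_succ
  have e1 : ψ (X 1) = Polynomial.C (X 0) := by
    rw [hren, show ((Equiv.swap (3 : Fin 4) 0) 1) = Fin.succ 0 from by decide]
    exact finSuccEquiv_X_succ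
  have e2 : ψ (X 2) = Polynomial.C (X 1) := by
    rw [hren, show ((Equiv.swap (3 : Fin 4) 0) 2) = Fin.succ 1 from by decide]
    exact finSuccEquiv_X_succ
  have e3 : ψ (X 3) = Polynomial.X := by
    rw [hren, show ((Equiv.swap (3 : Fin 4) 0) 3) = 0 from by decide]
    exact finSuccEquiv_X_zero
  have hψf : ψ (fermat d) = Polynomial.X ^ d + Polynomial.C c := by
    rw [fermat, map_add, map_add, map_add, map_pow, map_pow, map_pow, map_pow,
      e0, e1, e2, e3, hc, map_add, map_add, map_pow, map_pow, map_pow]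
    ring
  -- irreducibility and primality of g₂
  have hCg₂_irr : Irreducible (Polynomial.C g₂) := by
    rw [← hψg]
    exact (MulEquiv.irreducible_iff (ψ : MvPolynomial (Fin 4) ℂ ≃* Polynomial S3)).mpr hg_irr
  have hg₂_irr : Irreducible g₂ := by
    constructor
    · intro hunit
      exact hCg₂_irr.not_isUnit (hunit.map Polynomial.C)
    · intro a b hab
      have := hCg₂_irr.isUnit_or_isUnit (a := Polynomial.C a) (b := Polynomial.C b)
        (by rw [hab, map_mul])
      rcases this with h | h
      · exact Or.inl (Polynomial.isUnit_C.mp h)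
      · exact Or.inr (Polynomial.isUnit_C.mp h)
  have hg₂_prime : Prime g₂ := hg₂_irr.prime
  -- the primitive root of unity as a unit of S3
  have hdne : d ≠ 0 := by omega
  have hprim : IsPrimitiveRoot (Complex.exp (2 * Real.pi * Complex.I / d)) d :=
    Complex.isPrimitiveRoot_exp d hdne
  have hζ0 : Complex.exp (2 * Real.pi * Complex.I / d) ≠ 0 := Complex.exp_ne_zero _
  set ζ := Complex.exp (2 * Real.pi * Complex.I / d) with hζ
  set u : S3ˣ := ⟨MvPolynomial.C ζ, MvPolynomial.C ζ⁻¹,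
    by rw [← map_mul, mul_inv_cancel₀ hζ0, map_one],
    by rw [← map_mul, inv_mul_cancel₀ hζ0, map_one]⟩ with hu'
  have hu : ∀ n : ℕ, ((u : S3)) ^ n = 1 ↔ d ∣ n := by
    intro n
    constructor
    · intro h
      have : (MvPolynomial.C (ζ ^ n) : S3) = MvPolynomial.C (1 : ℂ) := by
        rw [map_pow, map_one]; exact h
      exact (IsPrimitiveRoot.pow_eq_one_iff_dvd hprim n).mp (MvPolynomial.C_injective _ _ this)
    · intro h
      show (MvPolynomial.C ζ : S3) ^ n = 1
      rw [← map_pow, (IsPrimitiveRoot.pow_eq_one_iff_dvd hprim n).mpr h, map_one]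
  -- the ideal correspondence
  set I : Ideal (MvPolynomial (Fin 4) ℂ) := Ideal.span {g, fermat d} with hI
  set I' : Ideal (Polynomial S3) :=
    Ideal.span {Polynomial.C g₂, Polynomial.X ^ d + Polynomial.C c} with hI'
  have hmapI : Ideal.map (ψ : MvPolynomial (Fin 4) ℂ →+* Polynomial S3) I = I' := by
    rw [hI, Ideal.map_span, Set.image_pair]
    simp only [RingHom.coe_coe, hψg, hψf]
    exact hI'.symm
  have hcomapI : Ideal.comap (ψ : MvPolynomial (Fin 4) ℂ →+* Polynomial S3) I' = I := by
    rw [← hmapI]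
    exact Ideal.comap_map_of_bijective _ ψ.bijective
  -- properness
  have hItop : I ≠ ⊤ := by
    intro htop
    have h1 : (1 : MvPolynomial (Fin 4) ℂ) ∈ I := htop ▸ Submodule.mem_top
    have hle : I ≤ RingHom.ker (constantCoeff : MvPolynomial (Fin 4) ℂ →+* ℂ) := by
      rw [hI, Ideal.span_le]
      rintro t ht
      rcases ht with rfl | rfl
      · show constantCoeff t = 0
        rw [constantCoeff_eq]
        apply hg_hom.coeff_eq_zero
        simp only [map_zero]
        omega
      · show constantCoeff (fermat d) = 0
        simp [fermat, map_add, map_pow, zero_pow hdne]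
    have := hle h1
    rw [RingHom.mem_ker, map_one] at this
    exact one_ne_zero this
  have hI'top : I' ≠ ⊤ := by
    intro htop
    apply hItop
    rw [← hcomapI, htop, Ideal.comap_top]
  -- apply the main lemma
  have hmain := main_abstract hg₂_prime hd c u hu (hI' ▸ hI'top)
  have hcor := Ideal.comap_minimalPrimes_eq_of_surjective
    (f := (ψ : MvPolynomial (Fin 4) ℂ →+* Polynomial S3)) ψ.surjective I'
  rw [hcomapI] at hcor
  have hinj : Function.Injective
      (Ideal.comap (ψ : MvPolynomial (Fin 4) ℂ →+* Polynomial S3) :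
        Ideal (Polynomial S3) → Ideal (MvPolynomial (Fin 4) ℂ)) :=
    Ideal.comap_injective_of_surjective _ ψ.surjective
  constructor
  · rw [hcor]
    exact Set.Finite.image _ (hI' ▸ hmain.1)
  · rw [hcor, Set.ncard_image_of_injective _ hinj]
    exact hI' ▸ hmain.2
end

section
/- Suppose (x₀, y₀, z₀) ∈ ℂ³ is a nonzero triple satisfying g(x₀,y₀,z₀,0) = 0 and x₀^d + y₀^d + z₀^d = 0. Then for every minimal prime r over I = (g, x^d+y^d+z^d+w^d), every polynomial belonging to r vanishes at the point (x₀, y₀, z₀, 0); in other words, the point [x₀,y₀,z₀,0] lies on every irreducible component of the curve cut out on the Fermat surface by g. -/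
open MvPolynomial

/-- If `r` is a minimal prime over `I` and `p ∈ r`, then some multiple `c * p ^ n`
with `c ∉ r` lies in `I`. -/
lemma aux_minimal_prime {R : Type*} [CommRing R] {I r : Ideal R} (hr : r ∈ I.minimalPrimes)
    {p : R} (hp : p ∈ r) : ∃ (n : ℕ) (c : R), c ∉ r ∧ c * p ^ n ∈ I := by
  have hrp : r.IsPrime := hr.1.1
  by_contra hcon
  push_neg at hcon
  have hone : (1 : R) ∉ r := by
    intro h
    exact hrp.ne_top ((Ideal.eq_top_iff_one r).mpr h)
  let S : Submonoid R :=
    { carrier := {x | ∃ c n, c ∉ r ∧ c * p ^ n = x}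
      mul_mem' := by
        rintro a b ⟨c₁, n₁, h₁, rfl⟩ ⟨c₂, n₂, h₂, rfl⟩
        refine ⟨c₁ * c₂, n₁ + n₂, fun h => ?_, by ring⟩
        rcases hrp.mem_or_mem h with h | h
        exacts [h₁ h, h₂ h]
      one_mem' := ⟨1, 0, hone, by ring⟩ }
  have hdisj : Disjoint (I : Set R) (S : Set R) := by
    rw [Set.disjoint_left]
    rintro x hx ⟨c, n, hc, rfl⟩
    exact hcon n c hc hx
  obtain ⟨q, hq, hIq, hqdisj⟩ := Ideal.exists_le_prime_disjoint I S hdisj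
  have hqr : q ≤ r := by
    intro x hx
    by_contra hxr
    exact Set.disjoint_left.mp hqdisj hx ⟨x, 0, hxr, by ring⟩
  have hpq : p ∉ q := fun h =>
    Set.disjoint_left.mp hqdisj h ⟨1, 1, hone, by ring⟩
  exact hpq (hr.2 ⟨hq, hIq⟩ hqr hp)

lemma aux_coeff_comp {A : Type*} [CommRing A] (p : Polynomial A) (c : A) (t : ℕ) :
    (p.comp (Polynomial.C c * Polynomial.X)).coeff t = c ^ t * p.coeff t := by
  induction p using Polynomial.induction_on' with
  | add p q hp hq =>
    simp [Polynomial.add_comp, hp, hq, mul_add]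
  | monomial n a =>
    rw [Polynomial.monomial_comp, mul_pow, ← Polynomial.C_pow, ← mul_assoc, ← Polynomial.C_mul]
    rw [Polynomial.C_mul_X_pow_eq_monomial]
    simp only [Polynomial.coeff_monomial]
    split_ifs with h
    · subst h; ring
    · ring

set_option maxHeartbeats 2000000 in
theorem stmt2 (d e : ℕ) (hd : 1 ≤ d) (g : MvPolynomial (Fin 4) ℂ)
    (hg_irr : Irreducible g) (hg_hom : g.IsHomogeneous e) (he : 1 ≤ e)
    (hg_w : (3 : Fin 4) ∉ g.vars)
    (x₀ y₀ z₀ : ℂ) (hpt : (x₀, y₀, z₀) ≠ (0, 0, 0))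
    (hg0 : eval (![x₀, y₀, z₀, 0] : Fin 4 → ℂ) g = 0)
    (hD : x₀ ^ d + y₀ ^ d + z₀ ^ d = 0)
    (r : Ideal (MvPolynomial (Fin 4) ℂ))
    (hr : r ∈ (Ideal.span {g, fermat d}).minimalPrimes) :
    ∀ p ∈ r, eval (![x₀, y₀, z₀, 0] : Fin 4 → ℂ) p = 0 := by
  intro p hp
  have hd0 : d ≠ 0 := by omega
  have hrP : r.IsPrime := hr.1.1
  have hrI : Ideal.span {g, fermat d} ≤ r := hr.1.2
  have hfr : fermat d ∈ r := hrI (Ideal.subset_span (by simp))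
  -- the equivalence
  set τ : Equiv.Perm (Fin 4) := Equiv.swap 0 3 with hτdef
  set E : MvPolynomial (Fin 4) ℂ ≃ₐ[ℂ] Polynomial (MvPolynomial (Fin 3) ℂ) :=
    (renameEquiv ℂ τ).trans (finSuccEquiv ℂ 3) with hEdef
  have hEX : ∀ i : Fin 4, E (X i) =
      ![Polynomial.C (X 2), Polynomial.C (X 0), Polynomial.C (X 1), Polynomial.X] i := by
    intro i
    fin_cases i
    · show (finSuccEquiv ℂ 3) (rename τ (X 0)) = _
      rw [rename_X]
      rw [show τ 0 = 3 from rfl, show (3 : Fin 4) = Fin.succ 2 from rfl, finSuccEquiv_X_succ]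
      rfl
    · show (finSuccEquiv ℂ 3) (rename τ (X 1)) = _
      rw [rename_X]
      rw [show τ 1 = 1 from rfl, show (1 : Fin 4) = Fin.succ 0 from rfl, finSuccEquiv_X_succ]
      rfl
    · show (finSuccEquiv ℂ 3) (rename τ (X 2)) = _
      rw [rename_X]
      rw [show τ 2 = 2 from rfl, show (2 : Fin 4) = Fin.succ 1 from rfl, finSuccEquiv_X_succ]
      rfl
    · show (finSuccEquiv ℂ 3) (rename τ (X 3)) = _
      rw [rename_X]
      rw [show τ 3 = 0 from rfl, finSuccEquiv_X_zero]
      rfl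
  -- the evaluation compatibility
  have hχ : ∀ h : MvPolynomial (Fin 4) ℂ,
      eval ![x₀, y₀, z₀, 0] h = eval ![y₀, z₀, x₀] (Polynomial.eval 0 (E h)) := by
    have : (eval ![x₀, y₀, z₀, 0] : MvPolynomial (Fin 4) ℂ →+* ℂ) =
        ((eval ![y₀, z₀, x₀] : MvPolynomial (Fin 3) ℂ →+* ℂ).comp
          ((Polynomial.evalRingHom (0 : MvPolynomial (Fin 3) ℂ)).comp
            (E : MvPolynomial (Fin 4) ℂ →+* Polynomial (MvPolynomial (Fin 3) ℂ)))) := by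
      apply MvPolynomial.ringHom_ext
      · intro a
        have : E (C a) = Polynomial.C (C a) := by
          have h1 : (C a : MvPolynomial (Fin 4) ℂ) = algebraMap ℂ _ a := rfl
          rw [h1, AlgEquiv.commutes]
          rfl
        simp [this]
      · intro i
        fin_cases i <;> simp [hEX]
    intro h
    have h2 := congrFun (congrArg (fun f : MvPolynomial (Fin 4) ℂ →+* ℂ =>
      (f : MvPolynomial (Fin 4) ℂ → ℂ)) this) h
    simpa using h2
  -- `s` and the image of the Fermat polynomial
  set s : MvPolynomial (Fin 3) ℂ := X 0 ^ d + X 1 ^ d + X 2 ^ d with hsdef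
  have hEf : E (fermat d) = Polynomial.X ^ d + Polynomial.C s := by
    rw [show fermat d = X 0 ^ d + X 1 ^ d + X 2 ^ d + X 3 ^ d from rfl]
    simp only [map_add, map_pow, hEX]
    simp only [Matrix.cons_val_zero, Matrix.cons_val_one, Matrix.head_cons, hsdef,
      Matrix.cons_val_two, Matrix.tail_cons, Matrix.cons_val_three]
    rw [← Polynomial.C_pow, ← Polynomial.C_pow, ← Polynomial.C_pow, ← Polynomial.C_add,
      ← Polynomial.C_add]
    ring_nf
  -- the image of g is a constant polynomial `C g'` with `g'` irreducible
  have hdeg3 : degreeOf 3 g = 0 := by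
    rw [← Nat.le_zero, degreeOf_le_iff]
    intro m hm
    rw [Nat.le_zero]
    by_contra hne
    exact hg_w ((mem_vars _).mpr ⟨m, hm, Finsupp.mem_support_iff.mpr hne⟩)
  have hdeg : (E g).natDegree = 0 := by
    have h1 : E g = finSuccEquiv ℂ 3 (rename τ g) := rfl
    rw [h1, natDegree_finSuccEquiv]
    have h2 := degreeOf_rename_of_injective (τ.injective) (p := g) 3
    rw [show τ 3 = 0 from rfl] at h2
    rw [h2, hdeg3]
  set g' : MvPolynomial (Fin 3) ℂ := (E g).coeff 0 with hg'def
  have hEg : E g = Polynomial.C g' := Polynomial.eq_C_of_natDegree_eq_zero hdeg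
  have hg'_irr : Irreducible g' := by
    have h1 : Irreducible (Polynomial.C g') := by
      rw [← hEg]; exact hg_irr.map E
    refine ⟨fun h => h1.not_isUnit (h.map (Polynomial.C : _ →+* _)), fun a b hab => ?_⟩
    rcases h1.isUnit_or_isUnit (a := Polynomial.C a) (b := Polynomial.C b)
        (by rw [hab, map_mul]) with h | h
    · exact Or.inl (Polynomial.isUnit_C.mp h)
    · exact Or.inr (Polynomial.isUnit_C.mp h)
  -- a primitive d-th root of unity and the scaled factors
  set ζ : ℂ := Complex.exp (2 * Real.pi * Complex.I / d) with hζdef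
  have hζ : IsPrimitiveRoot ζ d := Complex.isPrimitiveRoot_exp d hd0
  set F : ℕ → Polynomial (MvPolynomial (Fin 3) ℂ) :=
    fun k => (E p).comp (Polynomial.C (C (ζ ^ k)) * Polynomial.X) with hFdef
  set P₁ : Polynomial (MvPolynomial (Fin 3) ℂ) := ∏ k ∈ Finset.range d, F k with hP₁def
  have hF0 : F 0 = E p := by
    rw [hFdef]
    simp
  have hFd : F d = F 0 := by
    rw [hFdef]
    simp only [hζ.pow_eq_one, pow_zero]
  obtain ⟨m, rfl⟩ : ∃ m, d = m + 1 := ⟨d - 1, by omega⟩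
  -- the norm `P₁` comes from an element of `r`
  have hP₁r : E.symm P₁ ∈ r := by
    have h1 : P₁ = (∏ k ∈ Finset.range m, F (k + 1)) * E p := by
      rw [hP₁def, Finset.prod_range_succ', hF0]
    rw [h1, map_mul, AlgEquiv.symm_apply_apply]
    exact r.mul_mem_left _ hp
  -- invariance of `P₁` under scaling
  have hcomp : ∀ k, (F k).comp (Polynomial.C (C ζ) * Polynomial.X) = F (k + 1) := by
    intro k
    rw [hFdef]
    simp only
    rw [Polynomial.comp_assoc]
    congr 1
    rw [Polynomial.mul_comp, Polynomial.C_comp, Polynomial.X_comp, ← mul_assoc, ← map_mul,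
      ← map_mul, ← pow_succ]
  have hinv : P₁.comp (Polynomial.C (C ζ) * Polynomial.X) = P₁ := by
    rw [hP₁def, Polynomial.prod_comp]
    calc ∏ k ∈ Finset.range (m + 1), (F k).comp (Polynomial.C (C ζ) * Polynomial.X)
        = ∏ k ∈ Finset.range (m + 1), F (k + 1) := by
          refine Finset.prod_congr rfl fun k _ => hcomp k
      _ = (∏ k ∈ Finset.range m, F (k + 1)) * F (m + 1) := Finset.prod_range_succ _ _
      _ = (∏ k ∈ Finset.range m, F (k + 1)) * F 0 := by rw [hFd]
      _ = ∏ k ∈ Finset.range (m + 1), F k := (Finset.prod_range_succ' _ _).symm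
  -- all exponents in `P₁` are divisible by `d`
  have hdvd : ∀ t : ℕ, P₁.coeff t ≠ 0 → (m + 1) ∣ t := by
    intro t ht
    have h1 : (C (ζ ^ t) : MvPolynomial (Fin 3) ℂ) * P₁.coeff t = P₁.coeff t := by
      have h0 := congrArg (fun q => q.coeff t) hinv
      simp only [aux_coeff_comp] at h0
      rw [← map_pow] at h0
      exact h0
    have h3 : ((C (ζ ^ t) : MvPolynomial (Fin 3) ℂ) - 1) * P₁.coeff t = 0 := by
      rw [sub_mul, one_mul, h1, sub_self]
    rcases mul_eq_zero.mp h3 with h | h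
    · have h4 : (C (ζ ^ t) : MvPolynomial (Fin 3) ℂ) = C 1 := by
        rw [map_one]; exact sub_eq_zero.mp h
      exact hζ.dvd_of_pow_eq_one t (MvPolynomial.C_injective _ _ h4)
    · exact absurd h ht
  -- the reduction of `P₁` modulo the Fermat polynomial
  set q' : MvPolynomial (Fin 3) ℂ :=
    ∑ t ∈ P₁.support, P₁.coeff t * (-s) ^ (t / (m + 1)) with hq'def
  have hPq : (Polynomial.X ^ (m + 1) + Polynomial.C s) ∣ P₁ - Polynomial.C q' := by
    have hsplit : P₁ - Polynomial.C q' = ∑ t ∈ P₁.support,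
        Polynomial.C (P₁.coeff t) * (Polynomial.X ^ t - Polynomial.C ((-s) ^ (t / (m + 1)))) := by
      conv_lhs => rw [Polynomial.as_sum_support P₁]
      rw [hq'def, map_sum, ← Finset.sum_sub_distrib]
      refine Finset.sum_congr rfl fun t _ => ?_
      rw [← Polynomial.C_mul_X_pow_eq_monomial, Polynomial.C_mul, mul_sub]
    rw [hsplit]
    refine Finset.dvd_sum fun t ht => ?_
    refine Dvd.dvd.mul_left ?_ _
    obtain ⟨j, rfl⟩ := hdvd t (Polynomial.mem_support_iff.mp ht)
    rw [Nat.mul_div_cancel_left j (by omega), pow_mul, map_pow, map_neg]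
    have h5 := sub_dvd_pow_sub_pow (Polynomial.X ^ (m + 1))
      (-Polynomial.C s : Polynomial (MvPolynomial (Fin 3) ℂ)) j
    rw [sub_neg_eq_add] at h5
    exact h5
  set q : MvPolynomial (Fin 4) ℂ := E.symm (Polynomial.C q') with hqdef
  have hEq : E q = Polynomial.C q' := by rw [hqdef, AlgEquiv.apply_symm_apply]
  have hqr : q ∈ r := by
    obtain ⟨u, hu⟩ := hPq
    have h1 : E.symm P₁ - q = fermat (m + 1) * E.symm u := by
      calc E.symm P₁ - q = E.symm (P₁ - Polynomial.C q') := by rw [map_sub, hqdef]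
        _ = E.symm (E (fermat (m + 1)) * u) := by rw [hu, hEf]
        _ = fermat (m + 1) * E.symm u := by rw [map_mul, AlgEquiv.symm_apply_apply]
    have h2 : q = E.symm P₁ - fermat (m + 1) * E.symm u := by rw [← h1]; ring
    rw [h2]
    exact Ideal.sub_mem _ hP₁r (r.mul_mem_right _ hfr)
  -- evaluation of `q`
  have hevs : eval ![y₀, z₀, x₀] s = 0 := by
    rw [hsdef]
    simp only [map_add, map_pow, eval_X]
    simp only [Matrix.cons_val_zero, Matrix.cons_val_one, Matrix.head_cons,
      Matrix.cons_val_two, Matrix.tail_cons]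
    linear_combination hD
  have hevq : eval ![x₀, y₀, z₀, 0] q = (eval ![x₀, y₀, z₀, 0] p) ^ (m + 1) := by
    rw [hχ q, hEq, Polynomial.eval_C]
    have h1 : eval ![y₀, z₀, x₀] q' = eval ![y₀, z₀, x₀] (P₁.coeff 0) := by
      rw [hq'def, map_sum]
      rw [Finset.sum_eq_single 0]
      · simp
      · intro t ht ht0
        obtain ⟨j, rfl⟩ := hdvd t (Polynomial.mem_support_iff.mp ht)
        have hj : j ≠ 0 := by rintro rfl; simp at ht0
        rw [map_mul, map_pow, Nat.mul_div_cancel_left j (by omega)]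
        rw [map_neg, hevs, neg_zero, zero_pow hj, mul_zero]
      · intro h0
        rw [Polynomial.notMem_support_iff.mp h0]
        simp
    rw [h1]
    have h2 : P₁.coeff 0 = (Polynomial.eval 0 (E p)) ^ (m + 1) := by
      rw [Polynomial.coeff_zero_eq_eval_zero, hP₁def, Polynomial.eval_prod]
      rw [Finset.prod_congr rfl (fun k _ => ?_), Finset.prod_const, Finset.card_range]
      rw [hFdef]
      simp [Polynomial.eval_comp]
    rw [h2, map_pow, ← hχ p]
  -- main step: `g'` divides `q'`
  have hgq : g' ∣ q' := by
    by_contra hnd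
    obtain ⟨n, c, hc, hcq⟩ := aux_minimal_prime hr hqr
    rw [Ideal.mem_span_pair] at hcq
    obtain ⟨a₁, b₁, hab⟩ := hcq
    have hab' : E a₁ * Polynomial.C g' +
        E b₁ * (Polynomial.X ^ (m + 1) + Polynomial.C s) = E c * Polynomial.C q' ^ n := by
      have h0 := congrArg E hab
      rw [map_add, map_mul, map_mul, map_mul, map_pow, hEg, hEf, hEq] at h0
      exact h0
    haveI hprime : (Ideal.span {g'}).IsPrime :=
      (Ideal.span_singleton_prime hg'_irr.ne_zero).mpr
        (UniqueFactorizationMonoid.irreducible_iff_prime.mp hg'_irr)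
    set mk : MvPolynomial (Fin 3) ℂ →+* (MvPolynomial (Fin 3) ℂ ⧸ Ideal.span {g'}) :=
      Ideal.Quotient.mk (Ideal.span {g'}) with hmkdef
    set π : Polynomial (MvPolynomial (Fin 3) ℂ) →+*
        Polynomial (MvPolynomial (Fin 3) ℂ ⧸ Ideal.span {g'}) :=
      Polynomial.mapRingHom mk with hπdef
    have hπC : ∀ a : MvPolynomial (Fin 3) ℂ, π (Polynomial.C a) = Polynomial.C (mk a) := by
      intro a
      rw [hπdef, Polynomial.coe_mapRingHom, Polynomial.map_C]
    have hπg : π (Polynomial.C g') = 0 := by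
      rw [hπC, Ideal.Quotient.eq_zero_iff_mem.mpr (Ideal.mem_span_singleton_self g'), map_zero]
    have hqbar : mk q' ≠ 0 := fun h =>
      hnd (Ideal.mem_span_singleton.mp (Ideal.Quotient.eq_zero_iff_mem.mp h))
    set Fb : Polynomial (MvPolynomial (Fin 3) ℂ ⧸ Ideal.span {g'}) :=
      Polynomial.X ^ (m + 1) + Polynomial.C (mk s) with hFbdef
    have hFbmonic : Fb.Monic := Polynomial.monic_X_pow_add_C _ hd0
    have hπf : π (Polynomial.X ^ (m + 1) + Polynomial.C s) = Fb := by
      rw [hπdef, Polynomial.coe_mapRingHom, Polynomial.map_add, Polynomial.map_pow,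
        Polynomial.map_X, Polynomial.map_C, hFbdef]
    have heq2 : π (E c) * Polynomial.C (mk q') ^ n = π (E b₁) * Fb := by
      have h0 := congrArg π hab'
      rw [map_add, map_mul, map_mul, map_mul, map_pow, hπg, mul_zero, zero_add, hπf, hπC] at h0
      rw [← h0]
    set Q : Polynomial (MvPolynomial (Fin 3) ℂ ⧸ Ideal.span {g'}) := π (E c) /ₘ Fb with hQdef
    set Erem : Polynomial (MvPolynomial (Fin 3) ℂ ⧸ Ideal.span {g'}) := π (E c) %ₘ Fb
      with hEremdef
    have hdiv : Erem + Fb * Q = π (E c) := Polynomial.modByMonic_add_div (π (E c)) Fb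
    have hCn : (Polynomial.C (mk q') : Polynomial _) ^ n ≠ 0 :=
      pow_ne_zero _ (fun h => hqbar (Polynomial.C_eq_zero.mp h))
    have hE0 : Erem = 0 := by
      by_contra hE
      have key : Erem * Polynomial.C (mk q') ^ n =
          Fb * (π (E b₁) - Q * Polynomial.C (mk q') ^ n) := by
        linear_combination Polynomial.C (mk q') ^ n * hdiv + heq2
      have hRne : Erem * Polynomial.C (mk q') ^ n ≠ 0 := mul_ne_zero hE hCn
      have hne : π (E b₁) - Q * Polynomial.C (mk q') ^ n ≠ 0 := by
        intro h
        rw [h, mul_zero] at key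
        exact hRne key
      have hlhs : (Erem * Polynomial.C (mk q') ^ n).degree < Fb.degree := by
        rw [Polynomial.degree_mul, ← map_pow, Polynomial.degree_C (pow_ne_zero n hqbar)]
        rw [add_zero]
        exact Polynomial.degree_modByMonic_lt _ hFbmonic
      have hrhs : Fb.degree ≤ (Fb * (π (E b₁) - Q * Polynomial.C (mk q') ^ n)).degree := by
        rw [Polynomial.degree_mul]
        exact le_add_of_nonneg_right (Polynomial.zero_le_degree_iff.mpr hne)
      rw [key] at hlhs
      exact absurd hlhs (not_lt.mpr hrhs)
    have hdvdc : π (E c) = Fb * Q := by rw [← hdiv, hE0, zero_add]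
    obtain ⟨u, hu⟩ := Polynomial.map_surjective mk Ideal.Quotient.mk_surjective Q
    have hker : π (E c - (Polynomial.X ^ (m + 1) + Polynomial.C s) * u) = 0 := by
      have hπu : π u = Q := by rw [hπdef, Polynomial.coe_mapRingHom]; exact hu
      rw [map_sub, map_mul, hπf, hπu, ← hdvdc, sub_self]
    have hmem : E c - (Polynomial.X ^ (m + 1) + Polynomial.C s) * u ∈
        (Ideal.span {g'}).map (Polynomial.C : MvPolynomial (Fin 3) ℂ →+* _) := by
      rw [← Ideal.mk_ker (I := Ideal.span {g'}), ← Polynomial.ker_mapRingHom]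
      exact hker
    rw [Ideal.map_span, Set.image_singleton] at hmem
    obtain ⟨v, hv⟩ := Ideal.mem_span_singleton.mp hmem
    have hcI : c ∈ Ideal.span {g, fermat (m + 1)} := by
      rw [Ideal.mem_span_pair]
      refine ⟨E.symm v, E.symm u, ?_⟩
      apply E.injective
      rw [map_add, map_mul, map_mul, AlgEquiv.apply_symm_apply, AlgEquiv.apply_symm_apply,
        hEg, hEf]
      linear_combination -hv
    exact hc (hrI hcI)
  -- conclusion
  obtain ⟨t', ht'⟩ := hgq
  have hevg' : eval ![y₀, z₀, x₀] g' = 0 := by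
    have h0 := hχ g
    rw [hEg, Polynomial.eval_C] at h0
    rw [← h0]
    exact hg0
  have hfin : eval ![x₀, y₀, z₀, 0] q = 0 := by
    rw [hχ q, hEq, Polynomial.eval_C, ht', map_mul, hevg', zero_mul]
  rw [hevq] at hfin
  exact (pow_eq_zero_iff hd0).mp hfin
end

section
/- Let d ≥ 1 be an integer and a ∈ ℂ with 1 + a^d ≠ 0. Then the ideal (y − a·x, x^d + y^d + z^d + w^d) of ℂ[x,y,z,w] is a prime ideal; in other words, the curve cut out on the Fermat surface x^d+y^d+z^d+w^d = 0 by the plane y = ax is irreducible. -/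
open MvPolynomial

private lemma double_root_aux {R : Type*} [CommRing R] {P : Polynomial R} {r : R}
    (h : (Polynomial.X - Polynomial.C r) ^ 2 ∣ P) : P.derivative.eval r = 0 := by
  obtain ⟨g, rfl⟩ := h
  simp [Polynomial.derivative_mul, Polynomial.derivative_pow]

private lemma sub_mem_of_comp_eq {A B : Type*} [CommRing A] [CommRing B]
    [Algebra ℂ A] [Algebra ℂ B] (ψ : A →ₐ[ℂ] B) (s : B →ₐ[ℂ] A) (I : Ideal A)
    (h : (Ideal.Quotient.mkₐ ℂ I).comp (s.comp ψ) = Ideal.Quotient.mkₐ ℂ I) (f : A) :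
    f - s (ψ f) ∈ I := by
  have h2 : Ideal.Quotient.mk I (s (ψ f)) = Ideal.Quotient.mk I f := by
    have := congrArg (fun g : A →ₐ[ℂ] A ⧸ I => g f) h
    simpa using this
  exact Ideal.Quotient.eq.mp h2.symm

private lemma prime_lin (b : ℂ) :
    Prime (X 1 - C b * X 0 : MvPolynomial (Fin 2) ℂ) := by
  set π : MvPolynomial (Fin 2) ℂ := X 1 - C b * X 0 with hπ
  have hne : π ≠ 0 := by
    intro h
    have := congrArg (eval ![(0 : ℂ), 1]) h
    simp [hπ] at this
  rw [← Ideal.span_singleton_prime hne]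
  set ψ : MvPolynomial (Fin 2) ℂ →ₐ[ℂ] MvPolynomial (Fin 1) ℂ :=
    aeval ![X 0, C b * X 0] with hψ
  set s : MvPolynomial (Fin 1) ℂ →ₐ[ℂ] MvPolynomial (Fin 2) ℂ := aeval ![X 0] with hs
  set I : Ideal (MvPolynomial (Fin 2) ℂ) := Ideal.span {π} with hI
  have hcomp : (Ideal.Quotient.mkₐ ℂ I).comp (s.comp ψ) = Ideal.Quotient.mkₐ ℂ I := by
    apply MvPolynomial.algHom_ext
    intro i
    fin_cases i
    · simp [hψ, hs, Fin.mk_zero, Fin.mk_one]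
    · simp only [hψ, hs, AlgHom.comp_apply, aeval_X, Fin.mk_one, Matrix.cons_val_one,
        Matrix.head_cons, Matrix.cons_val_zero, Matrix.cons_val_fin_one, map_mul, aeval_C]
      rw [← map_mul]
      exact Ideal.Quotient.eq.mpr (by
        simpa [hπ, MvPolynomial.algebraMap_eq] using
          I.neg_mem (Ideal.subset_span (Set.mem_singleton π)))
  have hker : I = RingHom.ker ψ.toRingHom := by
    apply le_antisymm
    · rw [hI, Ideal.span_le, Set.singleton_subset_iff]
      simp [RingHom.mem_ker, hπ, hψ]
    · intro f hf
      have h0 : ψ f = 0 := hf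
      have := sub_mem_of_comp_eq ψ s I hcomp f
      rwa [h0, map_zero, sub_zero] at this
  rw [hker]
  exact RingHom.ker_isPrime _

private lemma pi_dvd_q (d : ℕ) (hd : 1 ≤ d) (b : ℂ) (hb : b ^ d = -1) :
    ((X 1 - C b * X 0 : MvPolynomial (Fin 2) ℂ) ∣ (X 0 ^ d + X 1 ^ d)) ∧
      ¬ ((X 1 - C b * X 0 : MvPolynomial (Fin 2) ℂ) ^ 2 ∣ (X 0 ^ d + X 1 ^ d)) := by
  have hb0 : b ≠ 0 := by
    intro h
    rw [h, zero_pow (by omega : d ≠ 0)] at hb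
    exact (by norm_num : (0 : ℂ) ≠ -1) hb
  set e := MvPolynomial.finSuccEquiv ℂ 1 with he
  set x : MvPolynomial (Fin 1) ℂ := X 0 with hx
  set r : MvPolynomial (Fin 1) ℂ := C b⁻¹ * x with hr
  set u : Polynomial (MvPolynomial (Fin 1) ℂ) := -(Polynomial.C (C b)) with hu
  have hone : (1 : Fin 2) = Fin.succ (0 : Fin 1) := rfl
  have hCrc : (Polynomial.C (C b) : Polynomial (MvPolynomial (Fin 1) ℂ)) * Polynomial.C r =
      Polynomial.C x := by
    rw [hr, ← Polynomial.C_mul, ← mul_assoc, ← C_mul, mul_inv_cancel₀ hb0, C_1, one_mul]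
  have heπ : e (X 1 - C b * X 0) = u * (Polynomial.X - Polynomial.C r) := by
    rw [map_sub, map_mul, hone, finSuccEquiv_X_succ, finSuccEquiv_X_zero]
    have hC : e (C b) = Polynomial.C (C b) := by
      simp [he, finSuccEquiv_apply, eval₂Hom_C]
    rw [hC, hu]
    linear_combination -hCrc
  have heq : e (X 0 ^ d + X 1 ^ d) = Polynomial.X ^ d + Polynomial.C (x ^ d) := by
    rw [map_add, map_pow, map_pow, hone, finSuccEquiv_X_succ, finSuccEquiv_X_zero,
      ← Polynomial.C_pow, hx]
  have hroot : Polynomial.eval r (Polynomial.X ^ d + Polynomial.C (x ^ d)) = 0 := by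
    rw [Polynomial.eval_add, Polynomial.eval_pow, Polynomial.eval_X, Polynomial.eval_C, hr,
      mul_pow, ← C_pow, inv_pow, hb]
    norm_num
  have huu : IsUnit u := by
    rw [hu]
    exact (((Ne.isUnit hb0).map (C : ℂ →+* MvPolynomial (Fin 1) ℂ)).map
        (Polynomial.C : _ →+* Polynomial (MvPolynomial (Fin 1) ℂ))).neg
  constructor
  · have h1 : (Polynomial.X - Polynomial.C r) ∣ (Polynomial.X ^ d + Polynomial.C (x ^ d)) :=
      Polynomial.dvd_iff_isRoot.mpr hroot
    have h2 : e (X 1 - C b * X 0) ∣ e (X 0 ^ d + X 1 ^ d) := by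
      rw [heπ, heq, huu.mul_left_dvd]
      exact h1
    have := map_dvd e.symm h2
    simpa using this
  · intro hcon
    have h2 : (Polynomial.X - Polynomial.C r) ^ 2 ∣ Polynomial.X ^ d + Polynomial.C (x ^ d) := by
      have h3 : e ((X 1 - C b * X 0) ^ 2) ∣ e (X 0 ^ d + X 1 ^ d) := map_dvd e hcon
      rw [map_pow, heπ, heq, mul_pow] at h3
      exact dvd_trans (Dvd.intro_left (u ^ 2) rfl) h3
    have h4 := double_root_aux h2
    rw [Polynomial.derivative_add, Polynomial.derivative_C, add_zero,
      Polynomial.derivative_X_pow, Polynomial.eval_mul, Polynomial.eval_pow,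
      Polynomial.eval_C, Polynomial.eval_X] at h4
    have hd0 : ((d : MvPolynomial (Fin 1) ℂ)) ≠ 0 := by
      exact_mod_cast Nat.cast_ne_zero.mpr (by omega)
    have hr0 : r ≠ 0 := by
      rw [hr]
      apply mul_ne_zero _ (X_ne_zero 0)
      simpa using inv_ne_zero hb0
    exact (mul_ne_zero hd0 (pow_ne_zero _ hr0)) h4

private lemma prime_G (d : ℕ) (hd : 1 ≤ d) (c : ℂ) (hc : c ≠ 0) :
    Prime (C c * X 0 ^ d + X 1 ^ d + X 2 ^ d : MvPolynomial (Fin 3) ℂ) := by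
  obtain ⟨b, hb⟩ := IsAlgClosed.exists_pow_nat_eq (-1 : ℂ) (by omega : 0 < d)
  set π : MvPolynomial (Fin 2) ℂ := X 1 - C b * X 0 with hπ
  have hp : Prime π := prime_lin b
  set 𝓟 : Ideal (MvPolynomial (Fin 2) ℂ) := Ideal.span {π} with h𝓟def
  have h𝓟 : 𝓟.IsPrime := (Ideal.span_singleton_prime hp.ne_zero).mpr hp
  obtain ⟨hdvd1, hdvd2⟩ := pi_dvd_q d hd b hb
  set q : MvPolynomial (Fin 2) ℂ := X 0 ^ d + X 1 ^ d with hq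
  set α : MvPolynomial (Fin 2) ℂ := C c with hα
  have hα0 : α ≠ 0 := fun h => hc (by simpa [hα] using h)
  have hαu : IsUnit α := (Ne.isUnit hc).map (C : ℂ →+* MvPolynomial (Fin 2) ℂ)
  set e := MvPolynomial.finSuccEquiv ℂ 2 with he
  set f : Polynomial (MvPolynomial (Fin 2) ℂ) :=
    Polynomial.C α * Polynomial.X ^ d + Polynomial.C q with hf
  have hone : (1 : Fin 3) = Fin.succ (0 : Fin 2) := rfl
  have htwo : (2 : Fin 3) = Fin.succ (1 : Fin 2) := rfl
  have hfG : e (C c * X 0 ^ d + X 1 ^ d + X 2 ^ d) = f := by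
    have hC : e (C c) = Polynomial.C (C c) := by
      simp [he, finSuccEquiv_apply, eval₂Hom_C]
    rw [map_add, map_add, map_mul, map_pow, map_pow, map_pow, hone, htwo,
      finSuccEquiv_X_succ, finSuccEquiv_X_succ, finSuccEquiv_X_zero, hC, hf, hq, hα]
    rw [← Polynomial.C_pow, ← Polynomial.C_pow, add_assoc, ← Polynomial.C_add]
  have hnat : f.natDegree = d := by
    rw [hf, Polynomial.natDegree_add_C, Polynomial.natDegree_C_mul_X_pow d α hα0]
  have hcoeff0 : f.coeff 0 = q := by
    rw [hf]
    simp only [Polynomial.coeff_add, Polynomial.coeff_C_mul, Polynomial.coeff_X_pow,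
      Polynomial.coeff_C, if_neg (by omega : ¬ (0 : ℕ) = d), if_pos rfl, mul_zero, zero_add]
    simp
  have hEis : f.IsEisensteinAt 𝓟 := by
    constructor
    · intro hmem
      have hlc : f.leadingCoeff = α := by
        rw [Polynomial.leadingCoeff, hnat, hf]
        simp only [Polynomial.coeff_add, Polynomial.coeff_C_mul, Polynomial.coeff_X_pow,
          Polynomial.coeff_C, if_neg (by omega : ¬ d = 0), if_pos rfl, mul_one, add_zero]
        simp
      rw [hlc] at hmem
      exact h𝓟.ne_top (Ideal.eq_top_of_isUnit_mem _ hmem hαu)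
    · intro n hn
      rw [hnat] at hn
      rw [hf]
      simp only [Polynomial.coeff_add, Polynomial.coeff_C_mul, Polynomial.coeff_X_pow,
        Polynomial.coeff_C]
      rw [if_neg (by omega : ¬ n = d)]
      by_cases hn0 : n = 0
      · rw [if_pos hn0]
        simpa [h𝓟def, Ideal.mem_span_singleton] using hdvd1
      · rw [if_neg hn0]
        simp
    · rw [hcoeff0]
      intro hmem
      rw [h𝓟def, Ideal.span_singleton_pow, Ideal.mem_span_singleton] at hmem
      exact hdvd2 hmem
  have hprim : f.IsPrimitive := by
    intro k hk
    have hkd : k ∣ f.coeff d := (Polynomial.C_dvd_iff_dvd_coeff k f).mp hk d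
    have : f.coeff d = α := by
      rw [hf]
      simp only [Polynomial.coeff_add, Polynomial.coeff_C_mul, Polynomial.coeff_X_pow,
        Polynomial.coeff_C, if_neg (by omega : ¬ d = 0), if_pos rfl, mul_one, add_zero]
      simp
    rw [this] at hkd
    exact isUnit_of_dvd_unit hkd hαu
  have hirr : Irreducible f := hEis.irreducible h𝓟 hprim (by omega)
  have hirrG : Irreducible (C c * X 0 ^ d + X 1 ^ d + X 2 ^ d : MvPolynomial (Fin 3) ℂ) := by
    rw [← MulEquiv.irreducible_iff e, hfG]
    exact hirr
  exact (UniqueFactorizationMonoid.irreducible_iff_prime).mp hirrG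

theorem stmt3 (d : ℕ) (hd : 1 ≤ d) (a : ℂ) (ha : 1 + a ^ d ≠ 0) :
    (Ideal.span {X 1 - C a * X 0, fermat d} : Ideal (MvPolynomial (Fin 4) ℂ)).IsPrime := by
  set c : ℂ := 1 + a ^ d with hc
  set ℓ : MvPolynomial (Fin 4) ℂ := X 1 - C a * X 0 with hℓ
  set G : MvPolynomial (Fin 3) ℂ := C c * X 0 ^ d + X 1 ^ d + X 2 ^ d with hG
  have hGprime : Prime G := prime_G d hd c ha
  have hGspan : (Ideal.span {G}).IsPrime :=
    (Ideal.span_singleton_prime hGprime.ne_zero).mpr hGprime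
  set ψ : MvPolynomial (Fin 4) ℂ →ₐ[ℂ] MvPolynomial (Fin 3) ℂ :=
    aeval ![X 0, C a * X 0, X 1, X 2] with hψ
  set s : MvPolynomial (Fin 3) ℂ →ₐ[ℂ] MvPolynomial (Fin 4) ℂ :=
    aeval ![X 0, X 2, X 3] with hs
  set I : Ideal (MvPolynomial (Fin 4) ℂ) := Ideal.span {ℓ, fermat d} with hI
  have hℓI : ℓ ∈ I := Ideal.subset_span (Set.mem_insert _ _)
  have hFI : fermat d ∈ I := Ideal.subset_span (Set.mem_insert_of_mem _ rfl)
  have hsub : Ideal.span {ℓ} ≤ I := by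
    rw [Ideal.span_le, Set.singleton_subset_iff]; exact hℓI
  have hcomp : (Ideal.Quotient.mkₐ ℂ (Ideal.span {ℓ})).comp (s.comp ψ) =
      Ideal.Quotient.mkₐ ℂ (Ideal.span {ℓ}) := by
    apply MvPolynomial.algHom_ext
    intro i
    fin_cases i
    · simp [hψ, hs, Fin.mk_zero, Fin.mk_one]
    · simp only [hψ, hs, AlgHom.comp_apply, aeval_X, Fin.mk_one, Matrix.cons_val_one,
        Matrix.head_cons, Matrix.cons_val_zero, map_mul, aeval_C]
      rw [← map_mul]
      exact Ideal.Quotient.eq.mpr (by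
        simpa [hℓ, MvPolynomial.algebraMap_eq] using
          (Ideal.span {ℓ}).neg_mem (Ideal.subset_span (Set.mem_singleton ℓ)))
    · simp [hψ, hs]
    · simp [hψ, hs]
  have hkey : ∀ f, f - s (ψ f) ∈ Ideal.span {ℓ} :=
    sub_mem_of_comp_eq ψ s _ hcomp
  have hψF : ψ (fermat d) = G := by
    rw [fermat, hψ]
    simp only [map_add, map_pow, aeval_X, Matrix.cons_val_zero, Matrix.cons_val_one,
      Matrix.head_cons, Matrix.cons_val_two, Matrix.tail_cons, Matrix.cons_val_three,
      map_mul, aeval_C, hG, MvPolynomial.algebraMap_eq]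
    rw [mul_pow, ← C_pow, hc, C_add, C_1]
    ring
  have hker : I = RingHom.ker ((Ideal.Quotient.mk (Ideal.span {G})).comp ψ.toRingHom) := by
    apply le_antisymm
    · rw [hI, Ideal.span_le, Set.insert_subset_iff, Set.singleton_subset_iff]
      constructor
      · have hψℓ : ψ ℓ = 0 := by simp [hψ, hℓ]
        show (Ideal.Quotient.mk (Ideal.span {G})) (ψ ℓ) = 0
        rw [hψℓ, map_zero]
      · show (Ideal.Quotient.mk (Ideal.span {G})) (ψ (fermat d)) = 0
        rw [hψF]
        exact Ideal.Quotient.eq_zero_iff_mem.mpr (Ideal.subset_span rfl)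
    · intro f hf
      have hf0 : (Ideal.Quotient.mk (Ideal.span {G})) (ψ f) = 0 := hf
      have hmem : ψ f ∈ Ideal.span {G} := Ideal.Quotient.eq_zero_iff_mem.mp hf0
      obtain ⟨h, hh⟩ := Ideal.mem_span_singleton'.mp hmem
      have h1 : f - s (ψ f) ∈ I := hsub (hkey f)
      have hsG : s G ∈ I := by
        have h2 := hsub (hkey (fermat d))
        rw [hψF] at h2
        simpa using I.sub_mem hFI h2
      have h3 : s (ψ f) ∈ I := by
        rw [← hh, map_mul]
        exact I.mul_mem_left _ hsG
      simpa using I.add_mem h1 h3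
  haveI := hGspan
  exact hker ▸ RingHom.ker_isPrime _
end

section
/- Let h ∈ ℂ[[u]][v] be a squarefree Weierstrass polynomial of degree b ≥ 1 such that h and ℓ have no common non-unit divisor in ℂ[[u]][v]. Then Φ_h = Res_v(h, ω^d + ℓ) is a squarefree polynomial in ℂ[[u]][ω]. -/
open Polynomial

/-- The Sylvester matrix of `f` and `g`, regarded as polynomials of degree `m` and `n`
respectively (rows `0,…,n-1` carry the coefficients of `f`, rows `n,…,n+m-1` those of `g`). -/
noncomputable def sylvester {R : Type*} [CommRing R] (f g : Polynomial R) (m n : ℕ) :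
    Matrix (Fin (n + m)) (Fin (n + m)) R :=
  Matrix.of fun i j =>
    if (i : ℕ) < n then
      (if (i : ℕ) ≤ (j : ℕ) ∧ (j : ℕ) ≤ (i : ℕ) + m then f.coeff (m + i - j) else 0)
    else
      (if (i : ℕ) - n ≤ (j : ℕ) ∧ (j : ℕ) ≤ (i : ℕ) then g.coeff ((i : ℕ) - (j : ℕ)) else 0)

/-- The resultant of `f` and `g`, regarded as polynomials of degree `m` and `n`:
the determinant of the Sylvester matrix. -/
noncomputable def resultant {R : Type*} [CommRing R] (f g : Polynomial R) (m n : ℕ) : R :=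
  (_root_.sylvester f g m n).det

/-- A Weierstrass polynomial: a monic polynomial in `v` over `ℂ[[u]]` all of whose
non-leading coefficients vanish at `u = 0`. -/
def IsWeierstrass (f : Polynomial (PowerSeries ℂ)) : Prop :=
  f.Monic ∧ ∀ i < f.natDegree, PowerSeries.constantCoeff (f.coeff i) = 0

/-- The partial derivative `∂f/∂u`: the formal derivative of power series applied to
each coefficient of `f`. -/
noncomputable def pderivU (f : Polynomial (PowerSeries ℂ)) : Polynomial (PowerSeries ℂ) :=
  f.sum fun i c => Polynomial.C (PowerSeries.derivative ℂ c) * Polynomial.X ^ i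

/-- The intersection multiplicity `i₀(f,g) = dim_ℂ ℂ[[u]][v]/(f,g)` (as `finrank`,
which is `0` when the dimension is infinite). -/
noncomputable def interMult (f g : Polynomial (PowerSeries ℂ)) : ℕ :=
  Module.finrank ℂ (Polynomial (PowerSeries ℂ) ⧸ Ideal.span {f, g})

/-- The Milnor number `μ₀(f) = dim_ℂ ℂ[[u]][v]/(∂f/∂u, ∂f/∂v)` (as `finrank`,
which is `0` when the dimension is infinite). -/
noncomputable def milnor (f : Polynomial (PowerSeries ℂ)) : ℕ :=
  Module.finrank ℂ (Polynomial (PowerSeries ℂ) ⧸ Ideal.span {pderivU f, derivative f})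

/-- The local equation `ℓ = 1 + (α + u)^d + (γ + v)^d` of the Fermat curve
`x^d + y^d + z^d = 0` at the point `[1, α, γ]`. -/
noncomputable def ell (d : ℕ) (α γ : ℂ) : Polynomial (PowerSeries ℂ) :=
  Polynomial.C (1 + (PowerSeries.C α + PowerSeries.X) ^ d) +
    (Polynomial.C (PowerSeries.C γ) + Polynomial.X) ^ d

/-- `Φ_h = Res_v(h, ω^d + ℓ)`: the resultant with respect to `v` of `h` and `ω^d + ℓ`,
both viewed as polynomials in `v` with coefficients in `ℂ[[u]][ω]`.  It is a polynomial
in `ω` over `ℂ[[u]]`. -/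
noncomputable def PhiRes (d : ℕ) (α γ : ℂ) (h : Polynomial (PowerSeries ℂ)) :
    Polynomial (PowerSeries ℂ) :=
  _root_.resultant
    (h.map (Polynomial.C : PowerSeries ℂ →+* Polynomial (PowerSeries ℂ)))
    (Polynomial.C (Polynomial.X ^ d) +
      (ell d α γ).map (Polynomial.C : PowerSeries ℂ →+* Polynomial (PowerSeries ℂ)))
    h.natDegree d

section MapRes
variable {R S : Type*} [CommRing R] [CommRing S]

lemma resultant_map (φ : R →+* S) (f g : Polynomial R) (m n : ℕ) :
    _root_.resultant (f.map φ) (g.map φ) m n = φ (_root_.resultant f g m n) := by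
  rw [_root_.resultant, _root_.resultant, RingHom.map_det]
  congr 1
  ext i j
  simp [_root_.sylvester, Matrix.map_apply, apply_ite φ, Polynomial.coeff_map]

end MapRes

section DetRed
variable {A : Type*} [CommRing A] [Nontrivial A]

/-- matrix of remainders -/
noncomputable def modMat (f g : Polynomial A) (m : ℕ) : Matrix (Fin m) (Fin m) A :=
  Matrix.of fun k j => ((X ^ (m - 1 - (k : ℕ)) * g) %ₘ f).coeff (m - 1 - (j : ℕ))

lemma resultant_eq_det_modMat {f g : Polynomial A} {m n : ℕ}
    (hf : f.Monic) (hfm : f.natDegree = m) (hg : g.natDegree ≤ n)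
    (hm : 1 ≤ m) (hn : 1 ≤ n) :
    _root_.resultant f g m n = (modMat f g m).det := by
  classical
  set e : Fin n ⊕ Fin m ≃ Fin (n + m) := finSumFinEquiv
  -- the triangular matrix
  set T : Matrix (Fin (n + m)) (Fin (n + m)) A :=
    Matrix.of (fun i j => if (i : ℕ) < n then _root_.sylvester f g m n i j
      else (if i = j then 1 else 0)) with hT
  set Q : Matrix (Fin m) (Fin n) A :=
    Matrix.of (fun k l => ((X ^ (m - 1 - (k : ℕ)) * g) /ₘ f).coeff (n - 1 - (l : ℕ))) with hQ
  have hfne1 : f ≠ 1 := by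
    intro hf1; rw [hf1, natDegree_one] at hfm; omega
  -- f-rows are coefficients of X^(n-1-l) * f
  have hfrow : ∀ (l : Fin n) (j : Fin (n + m)),
      _root_.sylvester f g m n (e (Sum.inl l)) j = (X ^ (n - 1 - (l : ℕ)) * f).coeff (n + m - 1 - j) := by
    intro l j
    have hl : ((e (Sum.inl l) : Fin (n+m)) : ℕ) = (l : ℕ) := by simp [e]
    have hlj : (l : ℕ) < n := l.isLt
    have hj : (j : ℕ) < n + m := j.isLt
    rw [Polynomial.coeff_X_pow_mul']
    simp only [_root_.sylvester, Matrix.of_apply, hl, hlj, if_pos]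
    by_cases h1 : (l : ℕ) ≤ (j : ℕ) ∧ (j : ℕ) ≤ (l : ℕ) + m
    · rw [if_pos h1, if_pos (by omega)]
      congr 1; omega
    · rw [if_neg h1]
      by_cases h2 : (j : ℕ) ≤ (l : ℕ) + m
      · rw [if_pos (by omega)]
        refine (coeff_eq_zero_of_natDegree_lt ?_).symm
        rw [hfm]; omega
      · rw [if_neg (by omega)]
  -- g-rows are coefficients of X^(m-1-k) * g
  have hgrow : ∀ (k : Fin m) (j : Fin (n + m)),
      _root_.sylvester f g m n (e (Sum.inr k)) j = (X ^ (m - 1 - (k : ℕ)) * g).coeff (n + m - 1 - j) := by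
    intro k j
    have hk : ((e (Sum.inr k) : Fin (n+m)) : ℕ) = n + (k : ℕ) := by simp [e]
    have hkm : (k : ℕ) < m := k.isLt
    have hj : (j : ℕ) < n + m := j.isLt
    rw [Polynomial.coeff_X_pow_mul']
    simp only [_root_.sylvester, Matrix.of_apply, hk]
    rw [if_neg (by omega)]
    by_cases h1 : n + (k : ℕ) - n ≤ (j : ℕ) ∧ (j : ℕ) ≤ n + (k : ℕ)
    · rw [if_pos h1, if_pos (by omega)]
      congr 1; omega
    · rw [if_neg h1]
      by_cases h2 : (j : ℕ) ≤ n + (k : ℕ)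
      · rw [if_pos (by omega)]
        refine (coeff_eq_zero_of_natDegree_lt ?_).symm
        omega
      · rw [if_neg (by omega)]
  -- degree bounds for quotient and remainder
  have hq_deg : ∀ k : Fin m, ((X ^ (m - 1 - (k : ℕ)) * g) /ₘ f).natDegree < n := by
    intro k
    have h1 : (X ^ (m - 1 - (k : ℕ)) * g).natDegree ≤ (m - 1 - (k : ℕ)) + n :=
      le_trans (natDegree_mul_le) (by rw [natDegree_X_pow]; omega)
    have := natDegree_divByMonic (X ^ (m - 1 - (k : ℕ)) * g) hf
    rw [this, hfm]
    have := k.isLt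
    omega
  have hr_deg : ∀ k : Fin m, ((X ^ (m - 1 - (k : ℕ)) * g) %ₘ f).natDegree < m := by
    intro k
    have := natDegree_modByMonic_lt (X ^ (m - 1 - (k : ℕ)) * g) hf hfne1
    omega
  -- the main factorization over the sum index
  have key : (_root_.sylvester f g m n).submatrix e e =
      (Matrix.fromBlocks 1 0 Q (modMat f g m)) * (T.submatrix e e) := by
    ext i j
    have hrowT2 : ∀ l' : Fin m, T (e (Sum.inr l')) (e j) = (if Sum.inr l' = j then 1 else 0) := by
      intro l'
      have h1 : ¬ ((e (Sum.inr l') : Fin (n+m)) : ℕ) < n := by simp [e]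
      simp only [hT, Matrix.of_apply, if_neg h1]
      congr 1
      simp only [eq_iff_iff]
      exact ⟨fun hh => e.injective hh, fun hh => by rw [hh]⟩
    cases i with
    | inl l =>
        have hmain : ∀ x, Matrix.fromBlocks (1 : Matrix (Fin n) (Fin n) A) 0 Q (modMat f g m)
            (Sum.inl l) x * (T.submatrix e e) x j
            = if x = Sum.inl l then (T.submatrix e e) (Sum.inl l) j else 0 := by
          rintro (l' | k')
          · simp only [Matrix.fromBlocks_apply₁₁, Matrix.one_apply]
            by_cases hx : l' = l
            · subst hx; simp
            · rw [if_neg (fun hh => hx (Sum.inl.inj hh)), if_neg (Ne.symm hx), zero_mul]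
          · simp
        rw [Matrix.mul_apply, Finset.sum_congr rfl (fun x _ => hmain x),
          Finset.sum_ite_eq' Finset.univ (Sum.inl l) _, if_pos (Finset.mem_univ _)]
        simp only [Matrix.submatrix_apply]
        have hlt : ((e (Sum.inl l) : Fin (n+m)) : ℕ) < n := by simpa [e] using l.isLt
        simp only [hT, Matrix.of_apply, if_pos hlt]
    | inr k =>
        rw [Matrix.mul_apply, Fintype.sum_sum_type]
        simp only [Matrix.fromBlocks_apply₂₁, Matrix.fromBlocks_apply₂₂, Matrix.submatrix_apply]
        set Nj : ℕ := n + m - 1 - ((e j : Fin (n+m)) : ℕ) with hNj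
        set q : Polynomial A := (X ^ (m - 1 - (k : ℕ)) * g) /ₘ f with hq2
        set r : Polynomial A := (X ^ (m - 1 - (k : ℕ)) * g) %ₘ f with hr2
        have hsum1 : ∑ l : Fin n, Q k l * T (e (Sum.inl l)) (e j) = (q * f).coeff Nj := by
          have hTS : ∀ l : Fin n, T (e (Sum.inl l)) (e j)
              = (X ^ (n - 1 - (l : ℕ)) * f).coeff Nj := by
            intro l
            have hlt : ((e (Sum.inl l) : Fin (n+m)) : ℕ) < n := by simpa [e] using l.isLt
            simp only [hT, Matrix.of_apply, if_pos hlt]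
            exact hfrow l (e j)
          have hqrep : q = ∑ l ∈ Finset.range n, C (q.coeff (n - 1 - l)) * X ^ (n - 1 - l) := by
            conv_lhs => rw [as_sum_range' q n (hq_deg k)]
            rw [← Finset.sum_range_reflect]
            exact Finset.sum_congr rfl fun l _ => (C_mul_X_pow_eq_monomial).symm
          calc ∑ l : Fin n, Q k l * T (e (Sum.inl l)) (e j)
              = ∑ l : Fin n, q.coeff (n - 1 - (l : ℕ)) * (X ^ (n - 1 - (l : ℕ)) * f).coeff Nj :=
                Finset.sum_congr rfl fun l _ => by rw [hTS l]; rfl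
            _ = ∑ l ∈ Finset.range n, q.coeff (n - 1 - l) * (X ^ (n - 1 - l) * f).coeff Nj :=
                Fin.sum_univ_eq_sum_range
                  (fun l => q.coeff (n - 1 - l) * (X ^ (n - 1 - l) * f).coeff Nj) n
            _ = ∑ l ∈ Finset.range n, (C (q.coeff (n - 1 - l)) * (X ^ (n - 1 - l) * f)).coeff Nj :=
                Finset.sum_congr rfl fun l _ => by rw [coeff_C_mul]
            _ = (∑ l ∈ Finset.range n, C (q.coeff (n - 1 - l)) * (X ^ (n - 1 - l) * f)).coeff Nj := by
                rw [finset_sum_coeff]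
            _ = (q * f).coeff Nj := by
                congr 1
                conv_rhs => rw [hqrep, Finset.sum_mul]
                exact Finset.sum_congr rfl fun l _ => by ring
        have hsum2 : ∑ l' : Fin m, modMat f g m k l' * T (e (Sum.inr l')) (e j)
            = r.coeff Nj := by
          cases j with
          | inl j0 =>
              have : ∀ l' : Fin m, T (e (Sum.inr l')) (e (Sum.inl j0)) = 0 := by
                intro l'
                rw [hrowT2 l', if_neg (by simp)]
              rw [Finset.sum_congr rfl (fun l' _ => by rw [this l', mul_zero])]
              rw [Finset.sum_const_zero]
              refine (coeff_eq_zero_of_natDegree_lt ?_).symm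
              have h1 : r.natDegree < m := by rw [hr2]; exact hr_deg k
              have h2 : ((e (Sum.inl j0) : Fin (n+m)) : ℕ) < n := by simpa [e] using j0.isLt
              rw [hNj]
              omega
          | inr j0 =>
              have : ∀ l' : Fin m, modMat f g m k l' * T (e (Sum.inr l')) (e (Sum.inr j0))
                  = if l' = j0 then modMat f g m k l' else 0 := by
                intro l'
                rw [hrowT2 l']
                by_cases hx : l' = j0
                · subst hx; simp
                · rw [if_neg (fun hh => hx (Sum.inr.inj hh)), if_neg hx, mul_zero]
              rw [Finset.sum_congr rfl (fun l' _ => this l'),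
                Finset.sum_ite_eq' Finset.univ j0 _, if_pos (Finset.mem_univ _)]
              have h2 : ((e (Sum.inr j0) : Fin (n+m)) : ℕ) = n + (j0 : ℕ) := by simp [e]
              show r.coeff (m - 1 - (j0 : ℕ)) = r.coeff Nj
              have h3 : m - 1 - (j0 : ℕ) = Nj := by
                rw [hNj]
                have := j0.isLt
                omega
              rw [h3]
        rw [hsum1, hsum2, hgrow k (e j)]
        have : X ^ (m - 1 - (k : ℕ)) * g = r + f * q := (modByMonic_add_div _ f).symm
        rw [this, coeff_add, mul_comm f q, add_comm]
  -- determinant of T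
  have hdetT : T.det = 1 := by
    have htri : T.BlockTriangular id := by
      intro i j hij
      have hij' : (j : ℕ) < (i : ℕ) := hij
      simp only [hT, Matrix.of_apply]
      by_cases hi : (i : ℕ) < n
      · rw [if_pos hi]
        simp only [_root_.sylvester, Matrix.of_apply, if_pos hi]
        rw [if_neg (by omega)]
      · rw [if_neg hi, if_neg (by exact fun hh => by subst hh; omega)]
    rw [Matrix.det_of_upperTriangular htri]
    apply Finset.prod_eq_one
    intro i _
    by_cases hi : (i : ℕ) < n
    · simp only [hT, Matrix.of_apply, if_pos hi, _root_.sylvester]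
      rw [if_pos ⟨le_refl _, Nat.le_add_right _ _⟩]
      have : m + (i : ℕ) - (i : ℕ) = m := by omega
      rw [this, ← hfm, hf.coeff_natDegree]
    · simp [hT, hi]
  -- put it together
  have e1 : _root_.resultant f g m n = ((_root_.sylvester f g m n).submatrix e e).det := by
    rw [_root_.resultant, Matrix.det_submatrix_equiv_self]
  rw [e1, key, Matrix.det_mul, Matrix.det_submatrix_equiv_self, hdetT, mul_one,
    Matrix.det_fromBlocks_zero₁₂, Matrix.det_one, one_mul]

end DetRed

section DetField
variable {F : Type*} [Field F]

lemma det_modMat_eq_prod {m : ℕ} (hm : 1 ≤ m) (r : Fin m → F) (hr : Function.Injective r)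
    (g : Polynomial F) :
    (modMat (∏ i, (X - C (r i))) g m).det = ∏ i, g.eval (r i) := by
  classical
  set f : Polynomial F := ∏ i, (X - C (r i)) with hfdef
  have hf : f.Monic := monic_prod_of_monic _ _ fun i _ => monic_X_sub_C _
  have hfm : f.natDegree = m := by
    rw [hfdef, natDegree_prod _ _ (fun i _ => X_sub_C_ne_zero _)]
    simp [natDegree_X_sub_C]
  have hfne1 : f ≠ 1 := fun h1 => by rw [h1, natDegree_one] at hfm; omega
  have hr_deg : ∀ k : Fin m, ((X ^ (m - 1 - (k : ℕ)) * g) %ₘ f).natDegree < m := fun k => by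
    have := natDegree_modByMonic_lt (X ^ (m - 1 - (k : ℕ)) * g) hf hfne1; omega
  have hfeval : ∀ i, f.eval (r i) = 0 := fun i => by
    rw [hfdef, eval_prod]
    exact Finset.prod_eq_zero (Finset.mem_univ i) (by simp)
  set E : Matrix (Fin m) (Fin m) F := Matrix.of fun j i => r i ^ (m - 1 - (j : ℕ)) with hE
  have hCE : modMat f g m * E = E * Matrix.diagonal (fun i => g.eval (r i)) := by
    ext k i
    rw [Matrix.mul_apply, Matrix.mul_diagonal]
    set p : Polynomial F := (X ^ (m - 1 - (k : ℕ)) * g) %ₘ f with hp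
    have h0 : ∑ j : Fin m, modMat f g m k j * E j i
        = ∑ j : Fin m, p.coeff (m - 1 - (j : ℕ)) * r i ^ (m - 1 - (j : ℕ)) := rfl
    have h1 : p.eval (r i) = r i ^ (m - 1 - (k : ℕ)) * g.eval (r i) := by
      have h2 : p = X ^ (m - 1 - (k : ℕ)) * g - f * ((X ^ (m - 1 - (k : ℕ)) * g) /ₘ f) := by
        rw [hp, eq_sub_iff_add_eq, modByMonic_add_div _ f]
      rw [h2]
      simp [hfeval i]
    rw [h0, Fin.sum_univ_eq_sum_range (fun j => p.coeff (m - 1 - j) * r i ^ (m - 1 - j)) m,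
      Finset.sum_range_reflect (fun a => p.coeff a * r i ^ a) m,
      ← Polynomial.eval_eq_sum_range' (hr_deg k) (r i), h1]
    rfl
  have hEdet : E.det ≠ 0 := by
    have hE2 : E = ((Matrix.vandermonde r).transpose).submatrix (⇑(Fin.revPerm : Equiv.Perm (Fin m))) id := by
      ext j i
      simp only [hE, Matrix.of_apply, Matrix.submatrix_apply, Matrix.transpose_apply,
        Matrix.vandermonde, Fin.revPerm_apply, Matrix.of_apply, Fin.val_rev]
      congr 1
      omega
    rw [hE2, Matrix.det_permute, Matrix.det_transpose]
    have hv : (Matrix.vandermonde r).det ≠ 0 := Matrix.det_vandermonde_ne_zero_iff.mpr hr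
    rcases Int.units_eq_one_or (Equiv.Perm.sign (Fin.revPerm : Equiv.Perm (Fin m))) with hs | hs <;>
      rw [hs] <;> simp [hv]
  have hdet2 := congrArg Matrix.det hCE
  rw [Matrix.det_mul, Matrix.det_mul, Matrix.det_diagonal, mul_comm] at hdet2
  exact mul_left_cancel₀ hEdet hdet2

/-- The product formula for the _root_.resultant of a split monic polynomial. -/
lemma resultant_eq_prod_eval {m n : ℕ} (hm : 1 ≤ m) (hn : 1 ≤ n)
    (r : Fin m → F) (hr : Function.Injective r) (g : Polynomial F) (hg : g.natDegree ≤ n) :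
    _root_.resultant (∏ i, (X - C (r i))) g m n = ∏ i, g.eval (r i) := by
  have hf : (∏ i, (X - C (r i))).Monic := monic_prod_of_monic _ _ fun i _ => monic_X_sub_C _
  have hfm : (∏ i, (X - C (r i))).natDegree = m := by
    rw [natDegree_prod _ _ (fun i _ => X_sub_C_ne_zero _)]
    simp [natDegree_X_sub_C]
  rw [resultant_eq_det_modMat hf hfm hg hm hn, det_modMat_eq_prod hm r hr g]

end DetField

set_option synthInstance.maxHeartbeats 1000000
set_option maxHeartbeats 1000000

noncomputable section FermatSetup

abbrev RR : Type := PowerSeries ℂ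
abbrev KK : Type := FractionRing RR
abbrev OM : Type := AlgebraicClosure KK
abbrev ψΩ : RR →+* OM := algebraMap _ _

instance : CharZero RR :=
  ⟨fun a b hab => by simpa using congrArg (PowerSeries.constantCoeff) hab⟩
instance : CharZero KK := charZero_of_injective_algebraMap (IsFractionRing.injective RR KK)
instance : CharZero OM := charZero_of_injective_algebraMap (algebraMap KK OM).injective
instance : Infinite OM :=
  Infinite.of_injective _ (Nat.cast_injective : Function.Injective (Nat.cast : ℕ → OM))

lemma psi_inj : Function.Injective ψΩ := by
  rw [show ψΩ = (algebraMap KK OM).comp (algebraMap RR KK) from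
    (IsScalarTower.algebraMap_eq RR KK OM)]
  exact (algebraMap KK OM).injective.comp (IsFractionRing.injective _ _)

instance : Module.IsTorsionFree RR OM := Module.isTorsionFree_iff_algebraMap_injective.2 psi_inj

lemma aeval_eq_eval_map (h : Polynomial RR) (x : OM) :
    aeval x h = (h.map ψΩ).eval x := by
  rw [aeval_def, eval₂_eq_eval_map]

lemma nodup_roots_map {h : Polynomial RR} (hmon : h.Monic) (hsq : Squarefree h) :
    (h.map ψΩ).roots.Nodup := by
  classical
  rw [Multiset.nodup_iff_count_le_one]
  by_contra hdup
  push_neg at hdup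
  obtain ⟨ρ, hρ⟩ := hdup
  rw [count_roots] at hρ
  have hsq2 : (X - C ρ) ^ 2 ∣ h.map ψΩ :=
    dvd_trans (pow_dvd_pow _ hρ) (pow_rootMultiplicity_dvd _ ρ)
  have hmapne : h.map ψΩ ≠ 0 := (hmon.map ψΩ).ne_zero
  have hroot : (h.map ψΩ).IsRoot ρ := by rw [← rootMultiplicity_pos hmapne]; omega
  have haev : aeval ρ h = 0 := by rw [aeval_eq_eval_map]; exact hroot
  have hint : IsIntegral RR ρ := ⟨h, hmon, haev⟩
  have hπmonic : (minpoly RR ρ).Monic := minpoly.monic hint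
  obtain ⟨w, hw⟩ : minpoly RR ρ ∣ h := minpoly.isIntegrallyClosed_dvd hint haev
  have hKmin : minpoly KK ρ = (minpoly RR ρ).map (algebraMap RR KK) :=
    minpoly.isIntegrallyClosed_eq_field_fractions KK OM hint
  have hsepK : (minpoly KK ρ).Separable := (minpoly.irreducible hint.tower_top).separable
  have hsepΩ : ((minpoly RR ρ).map ψΩ).Separable := by
    have heq : (minpoly RR ρ).map ψΩ = (minpoly KK ρ).map (algebraMap KK OM) := by
      rw [hKmin, Polynomial.map_map, ← IsScalarTower.algebraMap_eq]
    rw [heq]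
    exact hsepK.map
  by_cases hwρ : aeval ρ w = 0
  · obtain ⟨v, hv⟩ : minpoly RR ρ ∣ w := minpoly.isIntegrallyClosed_dvd hint hwρ
    have hππ : minpoly RR ρ * minpoly RR ρ ∣ h := ⟨v, by rw [hw, hv]; ring⟩
    have h1 : (minpoly RR ρ).natDegree = 0 := natDegree_eq_zero_of_isUnit (hsq _ hππ)
    have h2 := minpoly.natDegree_pos hint
    omega
  · have hprime : Prime (X - C ρ : Polynomial OM) := prime_X_sub_C ρ
    have hnd : ¬ (X - C ρ) ∣ w.map ψΩ := by
      rw [dvd_iff_isRoot]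
      intro hcon
      exact hwρ (by rw [aeval_eq_eval_map]; exact hcon)
    rw [hw, Polynomial.map_mul] at hsq2
    have hpa : (X - C ρ) ∣ (minpoly RR ρ).map ψΩ := by
      rcases hprime.dvd_mul.mp ((dvd_pow_self _ two_ne_zero).trans hsq2) with h' | h'
      · exact h'
      · exact absurd h' hnd
    obtain ⟨a', ha'⟩ := hpa
    have hstep : (X - C ρ) ∣ a' * w.map ψΩ := by
      obtain ⟨u, hu⟩ := hsq2
      have h5 : (X - C ρ) * (a' * w.map ψΩ) = (X - C ρ) * ((X - C ρ) * u) := by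
        have h6 : (X - C ρ) * (a' * map ψΩ w) = map ψΩ (minpoly RR ρ) * map ψΩ w := by
          rw [ha']; ring
        rw [h6, hu]; ring
      exact ⟨u, mul_left_cancel₀ hprime.ne_zero h5⟩
    have hpa' : (X - C ρ) ∣ a' := by
      rcases hprime.dvd_mul.mp hstep with h' | h'
      · exact h'
      · exact absurd h' hnd
    obtain ⟨a'', ha''⟩ := hpa'
    have : (X - C ρ) * (X - C ρ) ∣ (minpoly RR ρ).map ψΩ := ⟨a'', by rw [ha', ha'']; ring⟩
    exact Polynomial.not_isUnit_X_sub_C ρ (hsepΩ.squarefree _ this)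

lemma exists_residue :
    ∃ χ : integralClosure RR OM →+* ℂ,
      ∀ a : RR, χ (algebraMap RR (integralClosure RR OM) a)
        = PowerSeries.constantCoeff a := by
  classical
  set S := integralClosure RR OM
  have hker : RingHom.ker (algebraMap RR S) ≤ IsLocalRing.maximalIdeal RR := by
    intro x hx
    have : (algebraMap RR S x : OM) = 0 := by
      rw [show ((algebraMap RR S x : OM)) = ψΩ x from rfl]
        at *
      exact congrArg Subtype.val (hx : algebraMap RR S x = 0)
    have hx0 : x = 0 := psi_inj (by rw [show ψΩ x = (algebraMap RR S x : OM) from rfl, this]; simp)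
    simp [hx0]
  obtain ⟨P, hPmax, hPcomap⟩ :=
    Ideal.exists_ideal_over_maximal_of_isIntegral (IsLocalRing.maximalIdeal RR) hker
  haveI := hPmax
  letI : Field (S ⧸ P) := Ideal.Quotient.field P
  set f₀ : RR →+* S ⧸ P := (Ideal.Quotient.mk P).comp (algebraMap RR S) with hf₀
  have hkill : ∀ a : RR, f₀ a = f₀ (PowerSeries.C (PowerSeries.constantCoeff a)) := by
    intro a
    have hmem : a - PowerSeries.C (PowerSeries.constantCoeff a)
        ∈ IsLocalRing.maximalIdeal RR := by
      rw [IsLocalRing.mem_maximalIdeal, mem_nonunits_iff]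
      intro hu
      have := PowerSeries.isUnit_constantCoeff _ hu
      simp at this
    have hmem2 : algebraMap RR S (a - PowerSeries.C (PowerSeries.constantCoeff a)) ∈ P := by
      rw [← hPcomap] at hmem
      exact hmem
    have : f₀ (a - PowerSeries.C (PowerSeries.constantCoeff a)) = 0 := by
      rw [hf₀, RingHom.comp_apply, Ideal.Quotient.eq_zero_iff_mem]
      exact hmem2
    have h6 : f₀ a - f₀ (PowerSeries.C (PowerSeries.constantCoeff a)) = 0 := by
      rw [← map_sub]; exact this
    exact sub_eq_zero.mp h6
  letI : Algebra ℂ (S ⧸ P) := (f₀.comp (PowerSeries.C : ℂ →+* RR)).toAlgebra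
  have halgMap : ∀ z : ℂ, algebraMap ℂ (S ⧸ P) z = f₀ (PowerSeries.C z) := fun z => rfl
  haveI : Algebra.IsIntegral ℂ (S ⧸ P) := by
    constructor
    intro x
    obtain ⟨y, rfl⟩ := Ideal.Quotient.mk_surjective (I := P) x
    obtain ⟨p, hpmonic, hpval⟩ := (Algebra.IsIntegral.isIntegral (R := RR) y)
    refine ⟨p.map (PowerSeries.constantCoeff), hpmonic.map _, ?_⟩
    have h1 : eval₂ (algebraMap ℂ (S ⧸ P)) (Ideal.Quotient.mk P y) (p.map (PowerSeries.constantCoeff))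
        = eval₂ f₀ (Ideal.Quotient.mk P y) p := by
      rw [eval₂_map]
      congr 1
      ext a
      · exact (hkill a).symm
    rw [h1, hf₀]
    have h2 := Polynomial.hom_eval₂ p (algebraMap RR S) (Ideal.Quotient.mk P) y
    rw [← h2]
    have : eval₂ (algebraMap RR S) y p = 0 := hpval
    rw [this, map_zero]
  have hsurj : Function.Surjective (algebraMap ℂ (S ⧸ P)) :=
    IsAlgClosed.algebraMap_bijective_of_isIntegral.2
  have hinj : Function.Injective (algebraMap ℂ (S ⧸ P)) := (algebraMap ℂ (S ⧸ P)).injective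
  set eqv := RingEquiv.ofBijective (algebraMap ℂ (S ⧸ P)) ⟨hinj, hsurj⟩ with heqv
  refine ⟨(eqv.symm : (S ⧸ P) →+* ℂ).comp (Ideal.Quotient.mk P), fun a => ?_⟩
  have h3 : (Ideal.Quotient.mk P) (algebraMap RR S a) = f₀ a := rfl
  have h4 : f₀ a = eqv (PowerSeries.constantCoeff a) := by
    rw [hkill a]; rfl
  simp only [RingHom.comp_apply, h3, h4]
  exact eqv.symm_apply_apply _

lemma roots_enum {h : Polynomial RR} (hmon : h.Monic) (hsq : Squarefree h)
    (hb : 1 ≤ h.natDegree) :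
    ∃ r : Fin h.natDegree → OM, Function.Injective r ∧
      h.map ψΩ = ∏ i, (X - C (r i)) := by
  classical
  have hmm : (h.map ψΩ).Monic := hmon.map _
  have hsplits : (h.map ψΩ).Splits := IsAlgClosed.splits _
  have hprod := hsplits.eq_prod_roots_of_monic hmm
  have hnodup := nodup_roots_map hmon hsq
  set L := (h.map ψΩ).roots.toList with hL
  have hLnodup : L.Nodup := by
    have : (L : Multiset OM) = (h.map ψΩ).roots := Multiset.coe_toList _
    rw [← Multiset.coe_nodup, this]
    exact hnodup
  have hlen : L.length = h.natDegree := by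
    rw [hL, Multiset.length_toList, splits_iff_card_roots.mp hsplits, hmon.natDegree_map]
  refine ⟨fun i => L.get (finCongr hlen.symm i),
    fun i j hij => ?_, ?_⟩
  · have := List.nodup_iff_injective_get.mp hLnodup hij
    exact Fin.ext (by simpa using congrArg Fin.val this)
  · rw [hprod, show (h.map ψΩ).roots = (L : Multiset OM) from (Multiset.coe_toList _).symm]
    rw [Multiset.map_coe, Multiset.prod_coe]
    conv_lhs => rw [show L = List.ofFn L.get from (List.ofFn_get L).symm]
    rw [List.map_ofFn, List.prod_ofFn]
    exact (Equiv.prod_comp (finCongr hlen.symm) (fun j => X - C (L.get j))).symm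

end FermatSetup

theorem stmt6 (d : ℕ) (hd : 1 ≤ d) (α γ : ℂ) (hγ : γ ≠ 0) (hpt : 1 + α ^ d + γ ^ d = 0)
    (b : ℕ) (hb : 1 ≤ b) (h : Polynomial (PowerSeries ℂ))
    (hW : IsWeierstrass h) (hdeg : h.natDegree = b) (hsq : Squarefree h)
    (hcop : IsRelPrime h (ell d α γ)) :
    Squarefree (PhiRes d α γ h) := by
  classical
  obtain ⟨hmon, hWei⟩ := hW
  subst hdeg
  obtain ⟨r, hrinj, hrprod⟩ := roots_enum hmon hsq hb
  set ellΩ : Polynomial OM := (ell d α γ).map ψΩ with hellΩ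
  set c : Fin h.natDegree → OM := fun i => ellΩ.eval (r i) with hc
  set Θ : Polynomial RR →+* Polynomial OM := Polynomial.mapRingHom ψΩ with hΘdef
  -- degree bound for ell
  have hdegell : ellΩ.natDegree ≤ d := by
    refine le_trans natDegree_map_le ?_
    rw [ell]
    refine le_trans (natDegree_add_le _ _) (max_le (by rw [natDegree_C]; exact Nat.zero_le d) ?_)
    refine le_trans (natDegree_pow_le) ?_
    have : (Polynomial.C (PowerSeries.C γ) + Polynomial.X : Polynomial RR).natDegree = 1 := by
      rw [add_comm, natDegree_X_add_C]
    rw [this, mul_one]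
  -- roots of h are roots of h.map ψΩ
  have hroot_h : ∀ i, aeval (r i) h = 0 := by
    intro i
    rw [aeval_eq_eval_map, hrprod, eval_prod]
    exact Finset.prod_eq_zero (Finset.mem_univ i) (by simp)
  have hint : ∀ i, IsIntegral RR (r i) := fun i => ⟨h, hmon, hroot_h i⟩
  -- the key computation of the image of the _root_.resultant
  have key : Θ (PhiRes d α γ h) = ∏ i, (X ^ d + C (c i)) := by
    apply Polynomial.funext
    intro t
    have hev : (Θ (PhiRes d α γ h)).eval t
        = ((evalRingHom t).comp Θ) (PhiRes d α γ h) := rfl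
    set φt : Polynomial RR →+* OM := (evalRingHom t).comp Θ with hφt
    have hφtC : φt.comp (Polynomial.C : RR →+* Polynomial RR) = ψΩ := by
      ext a
      simp [hφt, hΘdef]
    rw [hev]
    have hup : PhiRes d α γ h = _root_.resultant (h.map (Polynomial.C : RR →+* Polynomial RR))
      (Polynomial.C (Polynomial.X ^ d) +
        (ell d α γ).map (Polynomial.C : RR →+* Polynomial RR)) h.natDegree d := rfl
    rw [hup, ← resultant_map φt]
    have hf : (h.map (Polynomial.C : RR →+* Polynomial RR)).map φt = h.map ψΩ := by
      rw [Polynomial.map_map, hφtC]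
    have hg : ((Polynomial.C (Polynomial.X ^ d) +
        (ell d α γ).map (Polynomial.C : RR →+* Polynomial RR)).map φt)
        = Polynomial.C (t ^ d) + ellΩ := by
      rw [Polynomial.map_add, Polynomial.map_map, hφtC, map_C]
      congr 2
      simp [hφt, hΘdef]
    rw [hf, hg, hrprod]
    have hgdeg : (Polynomial.C (t ^ d) + ellΩ).natDegree ≤ d :=
      le_trans (natDegree_add_le _ _) (max_le (by simp) hdegell)
    rw [resultant_eq_prod_eval hb hd r hrinj _ hgdeg, eval_prod]
    refine Finset.prod_congr rfl fun i _ => ?_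
    simp [hc]
  -- no evaluation of ell at a root vanishes
  have hc0 : ∀ i, c i ≠ 0 := by
    intro i h0
    have haevell : aeval (r i) (ell d α γ) = 0 := by
      rw [aeval_eq_eval_map]
      exact h0
    have h1 : minpoly RR (r i) ∣ h := minpoly.isIntegrallyClosed_dvd (hint i) (hroot_h i)
    have h2 : minpoly RR (r i) ∣ ell d α γ := minpoly.isIntegrallyClosed_dvd (hint i) haevell
    have h3 := natDegree_eq_zero_of_isUnit (hcop h1 h2)
    have h4 := minpoly.natDegree_pos (hint i)
    omega
  -- the residue homomorphism
  obtain ⟨χ, hχ⟩ := exists_residue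
  have hrS : ∀ i, r i ∈ integralClosure RR OM := fun i => (hint i)
  have hχr : ∀ i, χ ⟨r i, hrS i⟩ = 0 := by
    intro i
    set y : integralClosure RR OM := ⟨r i, hrS i⟩ with hy
    have hyval : aeval y h = 0 := by
      have := Subalgebra.aeval_coe (integralClosure RR OM) y h
      apply Subtype.ext
      rw [← this]
      show aeval (r i) h = (0 : OM)
      exact hroot_h i
    have h0 : χ (aeval y h) = 0 := by rw [hyval, map_zero]
    rw [aeval_def, hom_eval₂] at h0
    rw [eval₂_eq_sum_range] at h0
    rw [Finset.sum_range_succ] at h0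
    have hz : ∀ k ∈ Finset.range h.natDegree,
        (χ.comp (algebraMap RR (integralClosure RR OM))) (h.coeff k) * χ y ^ k = 0 := by
      intro k hk
      rw [RingHom.comp_apply, hχ, hWei k (Finset.mem_range.mp hk), zero_mul]
    rw [Finset.sum_eq_zero hz, zero_add, RingHom.comp_apply, hχ] at h0
    rw [hmon.coeff_natDegree] at h0
    simp only [map_one, one_mul] at h0
    exact pow_eq_zero_iff (by omega) |>.mp h0
  -- the values of ell at the roots
  have hci : ∀ i, c i = ψΩ (1 + (PowerSeries.C α + PowerSeries.X) ^ d)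
      + (ψΩ (PowerSeries.C γ) + r i) ^ d := by
    intro i
    rw [hc]
    simp only [hellΩ, ell, Polynomial.map_add, Polynomial.map_pow, Polynomial.map_C,
      Polynomial.map_X, eval_add, eval_pow, eval_C, eval_X]
  -- injectivity of the values
  have hcinj : ∀ i j, c i = c j → i = j := by
    intro i j hcij
    have hwd : (ψΩ (PowerSeries.C γ) + r i) ^ d = (ψΩ (PowerSeries.C γ) + r j) ^ d := by
      have := hcij
      rw [hci i, hci j] at this
      exact add_left_cancel this
    set wS : Fin h.natDegree → integralClosure RR OM := fun i =>
      algebraMap RR (integralClosure RR OM) (PowerSeries.C γ) + ⟨r i, hrS i⟩ with hwS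
    have hwcoe : ∀ i, ((wS i : OM)) = ψΩ (PowerSeries.C γ) + r i := fun i => rfl
    have hχw : ∀ i, χ (wS i) = γ := by
      intro i
      rw [hwS]
      simp only [map_add, hχr i, add_zero, hχ]
      simp
    have hwne : ∀ i, (ψΩ (PowerSeries.C γ) + r i) ≠ 0 := by
      intro i h0
      have h8 : wS i = 0 := Subtype.ext (by rw [hwcoe i, h0]; rfl)
      have h9 := hχw i
      rw [h8, map_zero] at h9
      exact hγ h9.symm
    set ζ : OM := (ψΩ (PowerSeries.C γ) + r j) / (ψΩ (PowerSeries.C γ) + r i) with hζ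
    have hζd : ζ ^ d = 1 := by
      rw [hζ, div_pow, ← hwd, div_self (pow_ne_zero _ (hwne i))]
    set ι : ℂ →+* OM := ψΩ.comp (PowerSeries.C : ℂ →+* RR) with hι
    have hPsplit : (X ^ d - Polynomial.C (1 : ℂ)).Splits :=
      IsAlgClosed.splits _
    have hPne : (X ^ d - Polynomial.C (1 : ℂ)) ≠ 0 := (monic_X_pow_sub_C _ (by omega)).ne_zero
    have hζroot : ζ ∈ ((X ^ d - Polynomial.C (1 : ℂ)).map ι).roots := by
      rw [mem_roots']
      constructor
      · exact ((monic_X_pow_sub_C _ (by omega : d ≠ 0)).map ι).ne_zero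
      · show IsRoot _ ζ
        simp [IsRoot, eval_map, hζd]
    rw [hPsplit.roots_map ι, Multiset.mem_map] at hζroot
    obtain ⟨μ, hμmem, hμeq⟩ := hζroot
    have hμd : μ ^ d = 1 := by
      have := isRoot_of_mem_roots hμmem
      simp only [IsRoot, eval_sub, eval_pow, eval_X, eval_C, sub_eq_zero] at this
      exact this
    have hwj : (ψΩ (PowerSeries.C γ) + r j) = ι μ * (ψΩ (PowerSeries.C γ) + r i) := by
      rw [hμeq, hζ, div_mul_cancel₀ _ (hwne i)]
    have hwSj : wS j = algebraMap RR (integralClosure RR OM) (PowerSeries.C μ) * wS i := by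
      apply Subtype.ext
      show ((wS j : OM)) = ψΩ (PowerSeries.C μ) * (wS i : OM)
      rw [hwcoe i, hwcoe j, hwj]
      rfl
    have hμ1 : μ = 1 := by
      have h9 := congrArg χ hwSj
      rw [map_mul, hχw j, hχw i, hχ] at h9
      simp only [PowerSeries.constantCoeff_C] at h9
      exact mul_right_cancel₀ hγ (by rw [one_mul, ← h9])
    have hwij : (ψΩ (PowerSeries.C γ) + r j) = (ψΩ (PowerSeries.C γ) + r i) := by
      rw [hwj, hμ1]
      simp [hι]
    exact (hrinj (add_left_cancel hwij)).symm
  -- squarefreeness of the image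
  have hsep : (∏ i, ((X : Polynomial OM) ^ d + C (c i))).Separable := by
    apply separable_prod
    · intro i j hij
      have hne : c j - c i ≠ 0 := sub_ne_zero.mpr (fun hh => hij (hcinj j i hh).symm)
      refine ⟨-C ((c j - c i)⁻¹), C ((c j - c i)⁻¹), ?_⟩
      have h1 : (-C ((c j - c i)⁻¹)) * (X ^ d + C (c i))
          + C ((c j - c i)⁻¹) * (X ^ d + C (c j))
          = C ((c j - c i)⁻¹) * (C (c j) - C (c i)) := by ring
      rw [h1, ← map_sub, ← C_mul, inv_mul_cancel₀ hne, C_1]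
    · intro i
      rw [show (X : Polynomial OM) ^ d + C (c i) = X ^ d - C (-(c i)) from by
        rw [map_neg, sub_neg_eq_add]]
      exact separable_X_pow_sub_C _ (Nat.cast_ne_zero.mpr (by omega)) (neg_ne_zero.mpr (hc0 i))
  have hsqf_im : Squarefree (Θ (PhiRes d α γ h)) := by
    rw [key]; exact hsep.squarefree
  -- pull squarefreeness back
  intro p hp
  have hu : IsUnit (Θ p) := hsqf_im (Θ p) (by rw [← map_mul]; exact map_dvd Θ hp)
  have hdeg0 : p.natDegree = 0 := by
    have h2 := natDegree_eq_zero_of_isUnit hu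
    have h3 : (Θ p).natDegree = p.natDegree := natDegree_map_eq_of_injective psi_inj p
    omega
  obtain ⟨s, rfl⟩ := natDegree_eq_zero.mp hdeg0
  rw [isUnit_C]
  set N := (∏ i, ((X : Polynomial OM) ^ d + C (c i))).natDegree with hN
  have hmonprod : (∏ i, ((X : Polynomial OM) ^ d + C (c i))).Monic :=
    monic_prod_of_monic _ _ fun i _ => monic_X_pow_add
      (lt_of_le_of_lt degree_C_le (by exact_mod_cast (by omega : 0 < d)))
  have hΦN : (PhiRes d α γ h).coeff N = 1 := by
    apply psi_inj
    have h1 : ψΩ ((PhiRes d α γ h).coeff N) = (Θ (PhiRes d α γ h)).coeff N := by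
      rw [hΘdef]
      simp [coeff_map]
    rw [h1, key, hN, hmonprod.coeff_natDegree, map_one]
  have hss : s * s ∣ (PhiRes d α γ h).coeff N := by
    have := (C_dvd_iff_dvd_coeff (s * s) (PhiRes d α γ h)).mp (by rw [C_mul]; exact hp) N
    exact this
  rw [hΦN] at hss
  exact isUnit_of_dvd_one (dvd_trans (Dvd.intro s rfl) hss)
end

section
/- Let h ∈ ℂ[[u]][v] be a Weierstrass polynomial of degree b ≥ 1. Then Φ_h = Res_v(h, ω^d + ℓ) is a monic polynomial of degree b·d in ω over ℂ[[u]], and every non-leading coefficient of Φ_h is a power series in u with zero constant term; that is, Φ_h is a Weierstrass polynomial of degree b·d in the variable ω. -/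
open Polynomial

/-! In `ω`, the first `d` rows of the Sylvester matrix of `h` and `ω ^ d + ℓ` are constant and
the other `b` rows have degree at most `d`, so `deg Φ_h ≤ b d` and the coefficient of `ω ^ (b d)`
is the determinant of a unitriangular matrix, namely `1`. Modulo `u`, `h` becomes `v ^ b` and
`ℓ(0, 0) = 0`, so the Sylvester matrix becomes lower triangular with determinant `ω ^ (b d)`. -/

section DetDegree

variable {R : Type*} [CommRing R]

theorem Polynomial.coeff_prod_sum_of_natDegree_le {ι : Type*} (s : Finset ι) (f : ι → R[X])
    (w : ι → ℕ) (h : ∀ i ∈ s, (f i).natDegree ≤ w i) :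
    (∏ i ∈ s, f i).coeff (∑ i ∈ s, w i) = ∏ i ∈ s, (f i).coeff (w i) := by
  induction s using Finset.cons_induction with
  | empty => simp
  | cons a s _ ih =>
    have hs : ∀ i ∈ s, (f i).natDegree ≤ w i := fun i hi => h i (Finset.mem_cons_of_mem hi)
    rw [Finset.prod_cons, Finset.sum_cons, Finset.prod_cons,
      coeff_mul_add_eq_of_natDegree_le (h a (Finset.mem_cons_self a s))
        ((natDegree_prod_le s f).trans (Finset.sum_le_sum hs)), ih hs]

variable {n : Type*} [Fintype n] [DecidableEq n] {M : Matrix n n R[X]} {w : n → ℕ}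

theorem Matrix.natDegree_det_le_of_natDegree_le (h : ∀ i j, (M i j).natDegree ≤ w i) :
    M.det.natDegree ≤ ∑ i, w i := by
  rw [Matrix.det_apply']
  refine natDegree_sum_le_of_forall_le _ _ fun σ _ => ?_
  rw [← C_eq_intCast, ← Equiv.sum_comp σ w]
  exact (natDegree_C_mul_le _ _).trans <|
    (natDegree_prod_le _ _).trans (Finset.sum_le_sum fun i _ => h (σ i) i)

theorem Matrix.coeff_det_of_natDegree_le (h : ∀ i j, (M i j).natDegree ≤ w i) :
    M.det.coeff (∑ i, w i) = (Matrix.of fun i j => (M i j).coeff (w i)).det := by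
  rw [Matrix.det_apply', Matrix.det_apply', finsetSum_coeff]
  refine Finset.sum_congr rfl fun σ _ => ?_
  rw [← C_eq_intCast, coeff_C_mul, ← Equiv.sum_comp σ w,
    coeff_prod_sum_of_natDegree_le _ _ _ fun i _ => h (σ i) i]
  rfl

end DetDegree

section Sylvester

variable {R : Type*} [CommRing R] {m n : ℕ}

theorem sylvester_apply_of_lt (f g : R[X]) {i : Fin (n + m)} (hi : (i : ℕ) < n) (j : Fin (n + m)) :
    _root_.sylvester f g m n i j =
      if (i : ℕ) ≤ j ∧ (j : ℕ) ≤ i + m then f.coeff (m + i - j) else 0 := by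
  simp only [_root_.sylvester, Matrix.of_apply, if_pos hi]

theorem sylvester_apply_of_le (f g : R[X]) {i : Fin (n + m)} (hi : n ≤ (i : ℕ)) (j : Fin (n + m)) :
    _root_.sylvester f g m n i j = if (i : ℕ) - n ≤ j ∧ (j : ℕ) ≤ i then g.coeff (i - j) else 0 := by
  simp only [_root_.sylvester, Matrix.of_apply, if_neg hi.not_gt]

theorem map_resultant {S : Type*} [CommRing S] (φ : R →+* S) (f g : R[X]) :
    φ (_root_.resultant f g m n) = _root_.resultant (f.map φ) (g.map φ) m n := by
  rw [_root_.resultant, _root_.resultant, RingHom.map_det]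
  congr 1
  ext i j
  simp only [RingHom.mapMatrix_apply, Matrix.map_apply, _root_.sylvester, Matrix.of_apply,
    coeff_map]
  split_ifs <;> simp

end Sylvester

section ResultantWithPower

variable {A : Type*} [CommRing A] {m n : ℕ}

theorem coeff_C_X_pow_add_map_C (g : A[X]) (k : ℕ) :
    (C (X ^ n) + g.map C : A[X][X]).coeff k = (if k = 0 then X ^ n else 0) + C (g.coeff k) := by
  rw [coeff_add, coeff_map, coeff_C]

theorem sum_fin_ite_lt (m n : ℕ) : ∑ i : Fin (n + m), (if (i : ℕ) < n then 0 else n) = m * n := by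
  simp [Fin.sum_univ_add]

theorem natDegree_sylvester_C_X_pow_add_le (f g : A[X]) (i j : Fin (n + m)) :
    (_root_.sylvester (f.map C) (C (X ^ n) + g.map C) m n i j).natDegree ≤
      if (i : ℕ) < n then 0 else n := by
  by_cases hi : (i : ℕ) < n
  · rw [sylvester_apply_of_lt _ _ hi, if_pos hi]
    split_ifs <;> simp
  · rw [sylvester_apply_of_le _ _ (not_lt.mp hi), if_neg hi, coeff_C_X_pow_add_map_C]
    split_ifs <;> simp [natDegree_X_pow_le]

theorem coeff_resultant_C_X_pow_add {f : A[X]} (hf : f.coeff m = 1) (hn : n ≠ 0) (g : A[X]) :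
    (_root_.resultant (f.map C) (C (X ^ n) + g.map C) m n).coeff (m * n) = 1 := by
  rw [_root_.resultant, ← sum_fin_ite_lt,
    Matrix.coeff_det_of_natDegree_le (natDegree_sylvester_C_X_pow_add_le f g)]
  have htri : (Matrix.of fun i j : Fin (n + m) =>
      (_root_.sylvester (f.map C) (C (X ^ n) + g.map C) m n i j).coeff
        (if (i : ℕ) < n then 0 else n)).IsUpperTriangular := by
    intro i j (hji : (j : ℕ) < i)
    by_cases hi : (i : ℕ) < n
    · simp [sylvester_apply_of_lt _ _ hi, hji.not_ge]
    · rw [Matrix.of_apply, sylvester_apply_of_le _ _ (not_lt.mp hi), coeff_C_X_pow_add_map_C,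
        if_neg (Nat.sub_ne_zero_of_lt hji)]
      split_ifs <;> simp [coeff_C, hn]
  rw [Matrix.det_of_isUpperTriangular htri]
  refine Finset.prod_eq_one fun i _ => ?_
  by_cases hi : (i : ℕ) < n
  · simp [sylvester_apply_of_lt _ _ hi, hi, hf]
  · rw [Matrix.of_apply, sylvester_apply_of_le _ _ (not_lt.mp hi), coeff_C_X_pow_add_map_C]
    simp [hi, coeff_C, hn]

theorem natDegree_resultant_C_X_pow_add_le (f g : A[X]) :
    (_root_.resultant (f.map C) (C (X ^ n) + g.map C) m n).natDegree ≤ m * n := by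
  rw [_root_.resultant, ← sum_fin_ite_lt]
  exact Matrix.natDegree_det_le_of_natDegree_le (natDegree_sylvester_C_X_pow_add_le f g)

theorem monic_resultant_C_X_pow_add {f : A[X]} (hf : f.Monic) (hn : n ≠ 0) (g : A[X]) :
    (_root_.resultant (f.map C) (C (X ^ n) + g.map C) f.natDegree n).Monic :=
  monic_of_natDegree_le_of_coeff_eq_one _ (natDegree_resultant_C_X_pow_add_le f g)
    (coeff_resultant_C_X_pow_add hf hn g)

theorem natDegree_resultant_C_X_pow_add [Nontrivial A] {f : A[X]} (hf : f.Monic) (hn : n ≠ 0)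
    (g : A[X]) :
    (_root_.resultant (f.map C) (C (X ^ n) + g.map C) f.natDegree n).natDegree =
      f.natDegree * n :=
  natDegree_eq_of_le_of_coeff_ne_zero (natDegree_resultant_C_X_pow_add_le f g)
    (by rw [coeff_resultant_C_X_pow_add hf hn g]; exact one_ne_zero)

/-- With `f = v ^ m` and `g(0) = 0` the Sylvester matrix becomes lower triangular, with diagonal
entries `1` and `ω ^ n`. -/
theorem resultant_X_pow_C_X_pow_add {g : A[X]} (hg : g.coeff 0 = 0) :
    _root_.resultant (X ^ m : A[X][X]) (C (X ^ n) + g.map C) m n = X ^ (m * n) := by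
  have htri : (_root_.sylvester (X ^ m : A[X][X]) (C (X ^ n) + g.map C) m n).IsLowerTriangular := by
    intro i j (hij : (i : ℕ) < j)
    by_cases hi : (i : ℕ) < n
    · rw [sylvester_apply_of_lt _ _ hi, coeff_X_pow]
      split_ifs <;> first | rfl | omega
    · rw [sylvester_apply_of_le _ _ (not_lt.mp hi), if_neg (by omega)]
  rw [_root_.resultant, Matrix.det_of_isLowerTriangular _ htri, ← sum_fin_ite_lt,
    ← Finset.prod_pow_eq_pow_sum]
  refine Finset.prod_congr rfl fun i _ => ?_
  by_cases hi : (i : ℕ) < n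
  · simp [sylvester_apply_of_lt _ _ hi, hi]
  · rw [sylvester_apply_of_le _ _ (not_lt.mp hi), coeff_C_X_pow_add_map_C]
    simp [hi, hg]

end ResultantWithPower

theorem IsWeierstrass.map_constantCoeff {h : Polynomial (PowerSeries ℂ)} (hW : IsWeierstrass h) :
    h.map PowerSeries.constantCoeff = X ^ h.natDegree := by
  ext i
  rw [coeff_map, coeff_X_pow]
  rcases lt_trichotomy i h.natDegree with hi | rfl | hi
  · rw [hW.2 i hi, if_neg hi.ne]
  · rw [hW.1.coeff_natDegree, if_pos rfl, map_one]
  · rw [coeff_eq_zero_of_natDegree_lt hi, if_neg hi.ne', map_zero]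

theorem coeff_zero_map_constantCoeff_ell {d : ℕ} {α γ : ℂ} (hpt : 1 + α ^ d + γ ^ d = 0) :
    ((ell d α γ).map PowerSeries.constantCoeff).coeff 0 = 0 := by
  simpa [ell, coeff_zero_eq_eval_zero] using hpt

theorem map_constantCoeff_PhiRes {d : ℕ} {α γ : ℂ} (hpt : 1 + α ^ d + γ ^ d = 0)
    {h : Polynomial (PowerSeries ℂ)} (hW : IsWeierstrass h) :
    (PhiRes d α γ h).map PowerSeries.constantCoeff = X ^ (h.natDegree * d) := by
  rw [PhiRes, ← coe_mapRingHom, map_resultant, Polynomial.map_add, Polynomial.map_C,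
    coe_mapRingHom, Polynomial.map_pow, map_X, Polynomial.map_map, Polynomial.map_map,
    mapRingHom_comp_C, ← Polynomial.map_map, ← Polynomial.map_map, hW.map_constantCoeff,
    Polynomial.map_pow, map_X]
  exact resultant_X_pow_C_X_pow_add (coeff_zero_map_constantCoeff_ell hpt)

theorem stmt17_general (d : ℕ) (hd : 1 ≤ d) (α γ : ℂ) (hpt : 1 + α ^ d + γ ^ d = 0)
    (b : ℕ) (h : Polynomial (PowerSeries ℂ))
    (hW : IsWeierstrass h) (hdeg : h.natDegree = b) :
    (PhiRes d α γ h).Monic ∧ (PhiRes d α γ h).natDegree = b * d ∧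
    ∀ i < b * d, PowerSeries.constantCoeff ((PhiRes d α γ h).coeff i) = 0 := by
  subst hdeg
  have hd0 : d ≠ 0 := by omega
  refine ⟨monic_resultant_C_X_pow_add hW.1 hd0 _, natDegree_resultant_C_X_pow_add hW.1 hd0 _,
    fun i hi => ?_⟩
  rw [← coeff_map, map_constantCoeff_PhiRes hpt hW, coeff_X_pow, if_neg hi.ne]

theorem stmt17 (d : ℕ) (hd : 1 ≤ d) (α γ : ℂ) (hγ : γ ≠ 0) (hpt : 1 + α ^ d + γ ^ d = 0)
    (b : ℕ) (hb : 1 ≤ b) (h : Polynomial (PowerSeries ℂ))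
    (hW : IsWeierstrass h) (hdeg : h.natDegree = b) :
    (PhiRes d α γ h).Monic ∧ (PhiRes d α γ h).natDegree = b * d ∧
    ∀ i < b * d, PowerSeries.constantCoeff ((PhiRes d α γ h).coeff i) = 0 :=
  stmt17_general d hd α γ hpt b h hW hdeg
end
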